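/- arXiv:2601.21324 — 6 statements merged into one kernel-verified Lean document; each statement's English description precedes it below -/
import Mathlib

section
/- Let Ξ0 be a nonempty measurable space, let P be a probability measure on Ξ0, let ε ∈ [0,1], and let f : Ξ0 → ℝ be a measurable function that is integrable with respect to P. Then, in the extended reals (with the convention 0·(+∞)=0), the supremum over all probability measures R on Ξ0 of the expectation of f under the mixture (1−ε)P + εR equals (1−ε)·E_P[f] + ε·sup_{ξ ∈ Ξ0} f(ξ). -/
open MeasureTheory
open scoped ENNReal

/-- Expectation of a real-valued function as an extended real number. -/
noncomputable def eexp {Ω : Type*} [MeasurableSpace Ω] (f : Ω → ℝ) (μ : Measure Ω) : EReal :=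
  ((∫⁻ ω, ENNReal.ofReal (f ω) ∂μ : ℝ≥0∞) : EReal)
    - ((∫⁻ ω, ENNReal.ofReal (-f ω) ∂μ : ℝ≥0∞) : EReal)

/-- Coe-difference of finite `ℝ≥0∞` values inside `EReal`. -/
lemma ereal_coe_sub_coe {x y : ℝ≥0∞} (hx : x ≠ ⊤) (hy : y ≠ ⊤) :
    (x : EReal) - (y : EReal) = ((x.toReal - y.toReal : ℝ) : EReal) := by
  have hx' : (x : EReal) = ((x.toReal : ℝ) : EReal) := by
    rw [← EReal.toReal_coe_ennreal]
    exact (EReal.coe_toReal (by simpa using hx) (EReal.coe_ennreal_ne_bot _)).symm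
  have hy' : (y : EReal) = ((y.toReal : ℝ) : EReal) := by
    rw [← EReal.toReal_coe_ennreal]
    exact (EReal.coe_toReal (by simpa using hy) (EReal.coe_ennreal_ne_bot _)).symm
  rw [hx', hy', ← EReal.coe_sub]

lemma toReal_ofReal_sub (x : ℝ) :
    (ENNReal.ofReal x).toReal - (ENNReal.ofReal (-x)).toReal = x := by
  rcases le_total 0 x with h | h
  · simp [ENNReal.toReal_ofReal h, ENNReal.ofReal_eq_zero.2 (by linarith : -x ≤ 0)]
  · simp [ENNReal.toReal_ofReal (by linarith : (0:ℝ) ≤ -x),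
      ENNReal.ofReal_eq_zero.2 h]

/-- **Worst-case risk of the (support-restricted) linear-vacuous contamination set.**
For a probability measure `P`, `ε ∈ [0,1]`, and a measurable `P`-integrable loss `f`,
the supremum, over all probability measures `R`, of the (extended-real) expectation of
`f` under the mixture `(1-ε)P + εR` equals `(1-ε)·E_P[f] + ε·sup f`. -/
theorem worst_case_risk_LV
    {Ξ₀ : Type*} [MeasurableSpace Ξ₀] [Nonempty Ξ₀]
    (P : Measure Ξ₀) [IsProbabilityMeasure P]
    (ε : ℝ) (hε0 : 0 ≤ ε) (hε1 : ε ≤ 1)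
    (f : Ξ₀ → ℝ) (hf : Measurable f) (hfi : Integrable f P) :
    (⨆ R : {R : Measure Ξ₀ // IsProbabilityMeasure R},
        eexp f (ENNReal.ofReal (1 - ε) • P + ENNReal.ofReal ε • R.1))
      = (((1 - ε) * ∫ ξ, f ξ ∂P : ℝ) : EReal)
        + (ε : EReal) * ⨆ ξ : Ξ₀, (f ξ : EReal) := by
  classical
  have hPM : Nonempty {R : Measure Ξ₀ // IsProbabilityMeasure R} := ⟨⟨P, inferInstance⟩⟩
  set c : ℝ := ∫ ξ, f ξ ∂P with hc_def
  set a : ℝ≥0∞ := ENNReal.ofReal (1 - ε) with ha_def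
  set b : ℝ≥0∞ := ENNReal.ofReal ε with hb_def
  set M : EReal := ⨆ ξ : Ξ₀, (f ξ : EReal) with hM_def
  -- finiteness of the positive/negative lintegrals under P
  have hnorm : ∫⁻ ω, ENNReal.ofReal ‖f ω‖ ∂P < ⊤ :=
    (hasFiniteIntegral_iff_norm f).1 hfi.hasFiniteIntegral
  have hIp : (∫⁻ ω, ENNReal.ofReal (f ω) ∂P) ≠ ⊤ :=
    ne_top_of_le_ne_top hnorm.ne
      (lintegral_mono fun ω => ENNReal.ofReal_le_ofReal (le_abs_self _))
  have hIm : (∫⁻ ω, ENNReal.ofReal (-f ω) ∂P) ≠ ⊤ :=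
    ne_top_of_le_ne_top hnorm.ne
      (lintegral_mono fun ω => ENNReal.ofReal_le_ofReal (neg_le_abs _))
  have hcI : c = (∫⁻ ω, ENNReal.ofReal (f ω) ∂P).toReal
      - (∫⁻ ω, ENNReal.ofReal (-f ω) ∂P).toReal :=
    integral_eq_lintegral_pos_part_sub_lintegral_neg_part hfi
  have ha_toReal : a.toReal = 1 - ε := ENNReal.toReal_ofReal (by linarith)
  have hb_toReal : b.toReal = ε := ENNReal.toReal_ofReal hε0
  -- decomposition of lintegrals over the mixture
  have hmix : ∀ (R : Measure Ξ₀) (g : Ξ₀ → ℝ≥0∞),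
      ∫⁻ ω, g ω ∂(a • P + b • R) = a * ∫⁻ ω, g ω ∂P + b * ∫⁻ ω, g ω ∂ R := by
    intro R g
    rw [lintegral_add_measure, lintegral_smul_measure, lintegral_smul_measure, smul_eq_mul, smul_eq_mul]
  have hfp : Measurable fun ω => ENNReal.ofReal (f ω) := hf.ennreal_ofReal
  have hfm : Measurable fun ω => ENNReal.ofReal (-f ω) := hf.neg.ennreal_ofReal
  -- value on a Dirac contamination
  have hdirac : ∀ ξ : Ξ₀,
      eexp f (a • P + b • Measure.dirac ξ)
        = (((1 - ε) * c + ε * f ξ : ℝ) : EReal) := by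
    intro ξ
    have h1 : ∫⁻ ω, ENNReal.ofReal (f ω) ∂(Measure.dirac ξ) = ENNReal.ofReal (f ξ) :=
      lintegral_dirac' ξ hfp
    have h2 : ∫⁻ ω, ENNReal.ofReal (-f ω) ∂(Measure.dirac ξ) = ENNReal.ofReal (-f ξ) :=
      lintegral_dirac' ξ hfm
    have hfin1 : a * (∫⁻ ω, ENNReal.ofReal (f ω) ∂P) + b * ENNReal.ofReal (f ξ) ≠ ⊤ :=
      ENNReal.add_ne_top.2 ⟨ENNReal.mul_ne_top ENNReal.ofReal_ne_top hIp,
        ENNReal.mul_ne_top ENNReal.ofReal_ne_top ENNReal.ofReal_ne_top⟩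
    have hfin2 : a * (∫⁻ ω, ENNReal.ofReal (-f ω) ∂P) + b * ENNReal.ofReal (-f ξ) ≠ ⊤ :=
      ENNReal.add_ne_top.2 ⟨ENNReal.mul_ne_top ENNReal.ofReal_ne_top hIm,
        ENNReal.mul_ne_top ENNReal.ofReal_ne_top ENNReal.ofReal_ne_top⟩
    rw [eexp, hmix, hmix, h1, h2, ereal_coe_sub_coe hfin1 hfin2]
    congr 1
    rw [ENNReal.toReal_add (ENNReal.mul_ne_top ENNReal.ofReal_ne_top hIp)
        (ENNReal.mul_ne_top ENNReal.ofReal_ne_top ENNReal.ofReal_ne_top),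
      ENNReal.toReal_add (ENNReal.mul_ne_top ENNReal.ofReal_ne_top hIm)
        (ENNReal.mul_ne_top ENNReal.ofReal_ne_top ENNReal.ofReal_ne_top),
      ENNReal.toReal_mul, ENNReal.toReal_mul, ENNReal.toReal_mul, ENNReal.toReal_mul,
      ha_toReal, hb_toReal]
    have := toReal_ofReal_sub (f ξ)
    rw [hcI]
    ring_nf
    nlinarith [toReal_ofReal_sub (f ξ)]
  -- trivial case ε = 0
  by_cases hε : ε = 0
  · subst hε
    have hmeas : ∀ R : {R : Measure Ξ₀ // IsProbabilityMeasure R},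
        a • P + b • R.1 = P := by
      intro R
      simp [ha_def, hb_def]
    have hval : ∀ R : {R : Measure Ξ₀ // IsProbabilityMeasure R},
        eexp f (a • P + b • R.1) = (c : EReal) := by
      intro R
      rw [hmeas R, eexp, ereal_coe_sub_coe hIp hIm, ← hcI]
    rw [iSup_congr hval, iSup_const]
    simp
  have hε' : 0 < ε := lt_of_le_of_ne hε0 (Ne.symm hε)
  have hb0 : b ≠ 0 := by simp [hb_def, hε', ENNReal.ofReal_eq_zero, not_le]
  by_cases hM : M = ⊤
  · -- unbounded case: both sides are ⊤
    have hRHS : (((1 - ε) * c : ℝ) : EReal) + (ε : EReal) * M = ⊤ := by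
      rw [hM, EReal.mul_top_of_pos (by exact_mod_cast hε'),
        EReal.add_top_of_ne_bot (EReal.coe_ne_bot _)]
    rw [hRHS]
    rw [iSup_eq_top]
    intro w hw
    induction w using EReal.rec with
    | bot =>
      obtain ⟨ξ⟩ := (inferInstance : Nonempty Ξ₀)
      exact ⟨⟨Measure.dirac ξ, inferInstance⟩, by rw [hdirac ξ]; exact bot_lt_iff_ne_bot.2 (EReal.coe_ne_bot _)⟩
    | coe r =>
      have : (((r - (1 - ε) * c) / ε : ℝ) : EReal) < M := hM ▸ EReal.coe_lt_top _
      rw [hM_def, lt_iSup_iff] at this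
      obtain ⟨ξ, hξ⟩ := this
      have hξ' : (r - (1 - ε) * c) / ε < f ξ := by exact_mod_cast hξ
      refine ⟨⟨Measure.dirac ξ, inferInstance⟩, ?_⟩
      rw [hdirac ξ]
      have : r < (1 - ε) * c + ε * f ξ := by
        have := (div_lt_iff₀ hε').1 hξ'
        linarith
      exact_mod_cast this
    | top => exact absurd hw (lt_irrefl _)
  · -- bounded case
    have hMbot : M ≠ ⊥ := by
      obtain ⟨ξ⟩ := (inferInstance : Nonempty Ξ₀)
      exact fun h => (EReal.coe_ne_bot (f ξ)) (le_bot_iff.1 (h ▸ le_iSup (fun ξ : Ξ₀ => (f ξ : EReal)) ξ))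
    obtain ⟨m, hm⟩ : ∃ m : ℝ, M = (m : EReal) :=
      ⟨M.toReal, (EReal.coe_toReal hM hMbot).symm⟩
    have hub : ∀ ξ, f ξ ≤ m := by
      intro ξ
      have := le_iSup (fun ξ : Ξ₀ => (f ξ : EReal)) ξ
      rw [← hM_def, hm] at this
      exact_mod_cast this
    have hRHS : (((1 - ε) * c : ℝ) : EReal) + (ε : EReal) * (m : EReal)
        = (((1 - ε) * c + ε * m : ℝ) : EReal) := by
      norm_cast
    rw [hm, hRHS]
    apply le_antisymm
    · -- upper bound for every R
      apply iSup_le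
      rintro ⟨R, hR⟩
      have hJp : (∫⁻ ω, ENNReal.ofReal (f ω) ∂ R) ≠ ⊤ := by
        refine ne_top_of_le_ne_top (@ENNReal.ofReal_ne_top m) ?_
        calc ∫⁻ ω, ENNReal.ofReal (f ω) ∂ R ≤ ∫⁻ _, ENNReal.ofReal m ∂ R :=
              lintegral_mono fun ω => ENNReal.ofReal_le_ofReal (hub ω)
          _ = ENNReal.ofReal m := by simp
      by_cases hJm : (∫⁻ ω, ENNReal.ofReal (-f ω) ∂ R) = ⊤
      · have : eexp f (a • P + b • R) = ⊥ := by
          rw [eexp, hmix, hmix, hJm, ENNReal.mul_top hb0, add_top]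
          simp [EReal.sub_top]
        rw [this]; exact bot_le
      · -- f is integrable w.r.t. R
        have habs : ∫⁻ ω, ENNReal.ofReal ‖f ω‖ ∂ R
            ≤ (∫⁻ ω, ENNReal.ofReal (f ω) ∂ R) + ∫⁻ ω, ENNReal.ofReal (-f ω) ∂ R := by
          rw [← lintegral_add_left hfp]
          refine lintegral_mono fun ω => ?_
          rcases le_total 0 (f ω) with h | h
          · rw [Real.norm_eq_abs, abs_of_nonneg h]
            exact le_add_right le_rfl
          · rw [Real.norm_eq_abs, abs_of_nonpos h]
            exact le_add_left le_rfl
        have hfiR : Integrable f R := by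
          refine ⟨hf.aestronglyMeasurable, ?_⟩
          rw [hasFiniteIntegral_iff_norm]
          exact lt_of_le_of_lt habs
            (ENNReal.add_lt_top.2 ⟨hJp.lt_top, lt_top_iff_ne_top.2 hJm⟩)
        have hcR : ∫ ω, f ω ∂ R = (∫⁻ ω, ENNReal.ofReal (f ω) ∂ R).toReal
            - (∫⁻ ω, ENNReal.ofReal (-f ω) ∂ R).toReal :=
          integral_eq_lintegral_pos_part_sub_lintegral_neg_part hfiR
        have hintR : ∫ ω, f ω ∂ R ≤ m := by
          calc ∫ ω, f ω ∂ R ≤ ∫ _, m ∂ R := integral_mono hfiR (integrable_const m) hub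
            _ = m := by simp
        have hfin1 : a * (∫⁻ ω, ENNReal.ofReal (f ω) ∂P)
            + b * (∫⁻ ω, ENNReal.ofReal (f ω) ∂ R) ≠ ⊤ :=
          ENNReal.add_ne_top.2 ⟨ENNReal.mul_ne_top ENNReal.ofReal_ne_top hIp,
            ENNReal.mul_ne_top ENNReal.ofReal_ne_top hJp⟩
        have hfin2 : a * (∫⁻ ω, ENNReal.ofReal (-f ω) ∂P)
            + b * (∫⁻ ω, ENNReal.ofReal (-f ω) ∂ R) ≠ ⊤ :=
          ENNReal.add_ne_top.2 ⟨ENNReal.mul_ne_top ENNReal.ofReal_ne_top hIm,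
            ENNReal.mul_ne_top ENNReal.ofReal_ne_top hJm⟩
        rw [eexp, hmix, hmix, ereal_coe_sub_coe hfin1 hfin2]
        rw [EReal.coe_le_coe_iff]
        rw [ENNReal.toReal_add (ENNReal.mul_ne_top ENNReal.ofReal_ne_top hIp)
            (ENNReal.mul_ne_top ENNReal.ofReal_ne_top hJp),
          ENNReal.toReal_add (ENNReal.mul_ne_top ENNReal.ofReal_ne_top hIm)
            (ENNReal.mul_ne_top ENNReal.ofReal_ne_top hJm),
          ENNReal.toReal_mul, ENNReal.toReal_mul, ENNReal.toReal_mul, ENNReal.toReal_mul,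
          ha_toReal, hb_toReal]
        have hJle : (∫⁻ ω, ENNReal.ofReal (f ω) ∂ R).toReal
            - (∫⁻ ω, ENNReal.ofReal (-f ω) ∂ R).toReal ≤ m := hcR ▸ hintR
        nlinarith [hcI]
    · -- lower bound via Dirac measures
      apply le_of_forall_lt
      intro x hx
      induction x using EReal.rec with
      | bot =>
        obtain ⟨ξ⟩ := (inferInstance : Nonempty Ξ₀)
        calc (⊥ : EReal) < (((1 - ε) * c + ε * f ξ : ℝ) : EReal) := bot_lt_iff_ne_bot.2 (EReal.coe_ne_bot _)
          _ = eexp f (a • P + b • Measure.dirac ξ) := (hdirac ξ).symm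
          _ ≤ _ := le_iSup (fun R : {R : Measure Ξ₀ // IsProbabilityMeasure R} =>
              eexp f (a • P + b • R.1)) ⟨Measure.dirac ξ, inferInstance⟩
      | coe r =>
        have hr : r < (1 - ε) * c + ε * m := by exact_mod_cast hx
        have : (((r - (1 - ε) * c) / ε : ℝ) : EReal) < M := by
          rw [hm, EReal.coe_lt_coe_iff, div_lt_iff₀ hε']
          linarith
        rw [hM_def, lt_iSup_iff] at this
        obtain ⟨ξ, hξ⟩ := this
        have hξ' : (r - (1 - ε) * c) / ε < f ξ := by exact_mod_cast hξ
        have hrξ : r < (1 - ε) * c + ε * f ξ := by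
          have := (div_lt_iff₀ hε').1 hξ'
          linarith
        calc (r : EReal) < (((1 - ε) * c + ε * f ξ : ℝ) : EReal) := by exact_mod_cast hrξ
          _ = eexp f (a • P + b • Measure.dirac ξ) := (hdirac ξ).symm
          _ ≤ _ := le_iSup (fun R : {R : Measure Ξ₀ // IsProbabilityMeasure R} =>
              eexp f (a • P + b • R.1)) ⟨Measure.dirac ξ, inferInstance⟩
      | top => exact absurd hx (not_lt.2 le_top)
end

section
/- Let P be a probability measure on a measurable space Ξ, let ε ∈ [0,1), and let f : Ξ → ℝ be measurable with E_P[|f|] < ∞ and M := sup_{ξ ∈ Ξ} f(ξ) < ∞. Then sup over all probability measures Q with TV(Q,P) ≤ ε of E_Q[f] equals (1−ε)·sup_{C ∈ A^←_ε(P)} E_C[f] + ε·M, where A^←_ε(P) := {C probability measure on Ξ : ∃ probability measure R on Ξ with P = (1−ε)C + εR} is the reverse LV ball (whose supremum of E_C[f] equals the conditional value at risk CVaR^P_{1−ε}(f)). Moreover, if M = +∞ and ε > 0 then the left-hand supremum is +∞. -/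
open MeasureTheory
open scoped ENNReal

/-- Total variation distance between two measures:
`TV(P,Q) = sup { |P(A) - Q(A)| : A measurable }`. -/
noncomputable def TVdist {Ξ : Type*} [MeasurableSpace Ξ] (P Q : Measure Ξ) : ℝ :=
  sSup {r : ℝ | ∃ A : Set Ξ, MeasurableSet A ∧ r = |(P A).toReal - (Q A).toReal|}

/-- The reverse LV ball of radius `ε` around `P`:
probability measures `C` such that `P = (1-ε)C + εR` for some probability measure `R`. -/
def revLVBall {Ξ : Type*} [MeasurableSpace Ξ] (ε : ℝ) (P : Measure Ξ) : Set (Measure Ξ) :=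
  {C | IsProbabilityMeasure C ∧ ∃ R : Measure Ξ, IsProbabilityMeasure R ∧
    P = ENNReal.ofReal (1 - ε) • C + ENNReal.ofReal ε • R}


namespace WCR
variable {Ω : Type*} [MeasurableSpace Ω] {f : Ω → ℝ} {μ : Measure Ω}

lemma ofReal_abs' (y : ℝ) : ENNReal.ofReal |y| = ENNReal.ofReal y + ENNReal.ofReal (-y) := by
  rcases le_total 0 y with h | h
  · simp [abs_of_nonneg h, ENNReal.ofReal_of_nonpos (neg_nonpos.2 h)]
  · simp [abs_of_nonpos h, ENNReal.ofReal_of_nonpos h]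

lemma lintegral_abs (hf : Measurable f) (μ : Measure Ω) :
    ∫⁻ ω, ENNReal.ofReal |f ω| ∂μ
      = (∫⁻ ω, ENNReal.ofReal (f ω) ∂μ) + ∫⁻ ω, ENNReal.ofReal (-f ω) ∂μ := by
  simp_rw [ofReal_abs']
  exact lintegral_add_left (by fun_prop) _

lemma integrable_iff_lintegrals (hf : Measurable f) :
    Integrable f μ ↔ (∫⁻ ω, ENNReal.ofReal (f ω) ∂μ ≠ ∞ ∧ ∫⁻ ω, ENNReal.ofReal (-f ω) ∂μ ≠ ∞) := by
  constructor
  · intro h1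
    have h2 := (hasFiniteIntegral_iff_norm f).1 h1.2
    simp_rw [Real.norm_eq_abs] at h2
    rw [lintegral_abs hf] at h2
    exact ⟨(lt_of_le_of_lt le_self_add h2).ne, (lt_of_le_of_lt le_add_self h2).ne⟩
  · rintro ⟨h1, h2⟩
    refine ⟨hf.aestronglyMeasurable, ?_⟩
    rw [hasFiniteIntegral_iff_norm]
    simp_rw [Real.norm_eq_abs]
    rw [lintegral_abs hf]
    exact ENNReal.add_lt_top.2 ⟨h1.lt_top, h2.lt_top⟩

lemma coe_e (x : ℝ≥0∞) (hx : x ≠ ∞) : (x : EReal) = ((x.toReal : ℝ) : EReal) := by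
  rw [← EReal.toReal_coe_ennreal,
    EReal.coe_toReal (by simp [EReal.coe_ennreal_eq_top_iff, hx]) (EReal.coe_ennreal_ne_bot x)]

lemma eexp_eq_integral (hf : Measurable f) (h : Integrable f μ) :
    eexp f μ = ((∫ ω, f ω ∂μ : ℝ) : EReal) := by
  obtain ⟨ha, hb⟩ := (integrable_iff_lintegrals hf).1 h
  rw [integral_eq_lintegral_pos_part_sub_lintegral_neg_part h, EReal.coe_sub, eexp,
    coe_e _ ha, coe_e _ hb]

lemma eexp_eq_bot (hb : ∫⁻ ω, ENNReal.ofReal (-f ω) ∂μ = ∞) : eexp f μ = ⊥ := by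
  rw [eexp, hb]
  simp [EReal.coe_ennreal_top, EReal.sub_top]

end WCR

namespace WCR
variable {Ξ : Type*} [MeasurableSpace Ξ]

lemma tv_le_iff (Q P : Measure Ξ) [IsProbabilityMeasure Q] [IsProbabilityMeasure P]
    {ε : ℝ} (hε : 0 ≤ ε) :
    TVdist Q P ≤ ε ↔ ∀ A : Set Ξ, MeasurableSet A → |(Q A).toReal - (P A).toReal| ≤ ε := by
  have hbdd : ∀ r ∈ {r : ℝ | ∃ A : Set Ξ, MeasurableSet A ∧ r = |(Q A).toReal - (P A).toReal|},
      r ≤ 1 := by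
    rintro r ⟨A, hA, rfl⟩
    have h1 : (Q A).toReal ≤ 1 := by
      simpa using ENNReal.toReal_mono ENNReal.one_ne_top (prob_le_one (μ := Q) (s := A))
    have h2 : (P A).toReal ≤ 1 := by
      simpa using ENNReal.toReal_mono ENNReal.one_ne_top (prob_le_one (μ := P) (s := A))
    have h3 : 0 ≤ (Q A).toReal := ENNReal.toReal_nonneg
    have h4 : 0 ≤ (P A).toReal := ENNReal.toReal_nonneg
    rw [abs_le]; constructor <;> linarith
  constructor
  · intro h A hA
    refine le_trans (le_csSup ⟨1, hbdd⟩ ⟨A, hA, rfl⟩) h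
  · intro h
    refine csSup_le ⟨0, ⟨∅, MeasurableSet.empty, by simp⟩⟩ ?_
    rintro r ⟨A, hA, rfl⟩
    exact h A hA

lemma ball_smul_le {P C : Measure Ξ} {ε : ℝ} (hC : C ∈ revLVBall ε P) :
    ENNReal.ofReal (1 - ε) • C ≤ P := by
  obtain ⟨_, R, _, hPR⟩ := hC
  rw [hPR]
  exact Measure.le_add_right le_rfl

lemma self_mem_ball (P : Measure Ξ) [IsProbabilityMeasure P] {ε : ℝ} (hε0 : 0 ≤ ε)
    (hε1 : ε < 1) : P ∈ revLVBall ε P := by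
  refine ⟨inferInstance, P, inferInstance, ?_⟩
  rw [← add_smul, ← ENNReal.ofReal_add (by linarith) hε0]
  simp

/-- `f` is integrable w.r.t. any measure `C` with `ofReal (1-ε) • C ≤ P`. -/
lemma integrable_of_smul_le {P C : Measure Ξ} {ε : ℝ} (hε1 : ε < 1)
    (hle : ENNReal.ofReal (1 - ε) • C ≤ P)
    {f : Ξ → ℝ} (hf : Measurable f) (hfi : Integrable f P) : Integrable f C := by
  have hc0 : ENNReal.ofReal (1 - ε) ≠ 0 := by
    simp [ENNReal.ofReal_eq_zero]; linarith
  rw [integrable_iff_lintegrals hf] at hfi ⊢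
  constructor
  · have := lintegral_mono' (f := fun ω => ENNReal.ofReal (f ω)) hle le_rfl
    rw [lintegral_smul_measure] at this
    intro h
    rw [h, smul_eq_mul, ENNReal.mul_top hc0] at this
    exact hfi.1 (top_le_iff.mp this)
  · have := lintegral_mono' (f := fun ω => ENNReal.ofReal (-f ω)) hle le_rfl
    rw [lintegral_smul_measure] at this
    intro h
    rw [h, smul_eq_mul, ENNReal.mul_top hc0] at this
    exact hfi.2 (top_le_iff.mp this)

/-- uniform bound on `|∫ f dC|` for `C` with `ofReal (1-ε) • C ≤ P`. -/
lemma abs_integral_le {P C : Measure Ξ} {ε : ℝ} (hε1 : ε < 1)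
    (hle : ENNReal.ofReal (1 - ε) • C ≤ P)
    {f : Ξ → ℝ} (hf : Measurable f) (hfi : Integrable f P) :
    |∫ ω, f ω ∂C| ≤ ((ENNReal.ofReal (1 - ε))⁻¹ * ∫⁻ ω, ENNReal.ofReal |f ω| ∂P).toReal := by
  have hc0 : ENNReal.ofReal (1 - ε) ≠ 0 := by
    simp [ENNReal.ofReal_eq_zero]; linarith
  have hPfin : ∫⁻ ω, ENNReal.ofReal |f ω| ∂P ≠ ∞ := by
    rw [lintegral_abs hf]
    obtain ⟨h1, h2⟩ := (integrable_iff_lintegrals hf).1 hfi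
    exact ENNReal.add_ne_top.2 ⟨h1, h2⟩
  have hCfin : ∫⁻ ω, ENNReal.ofReal |f ω| ∂C ≤ (ENNReal.ofReal (1 - ε))⁻¹ * ∫⁻ ω, ENNReal.ofReal |f ω| ∂P := by
    have := lintegral_mono' (f := fun ω => ENNReal.ofReal |f ω|) hle le_rfl
    rw [lintegral_smul_measure] at this
    calc ∫⁻ ω, ENNReal.ofReal |f ω| ∂C
        = (ENNReal.ofReal (1 - ε))⁻¹ * (ENNReal.ofReal (1 - ε) * ∫⁻ ω, ENNReal.ofReal |f ω| ∂C) := by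
          rw [← mul_assoc, ENNReal.inv_mul_cancel hc0 ENNReal.ofReal_ne_top, one_mul]
      _ ≤ _ := mul_le_mul_right this _
  have hfiC : Integrable f C := integrable_of_smul_le hε1 hle hf hfi
  calc |∫ ω, f ω ∂C| ≤ ∫ ω, |f ω| ∂C := by
        simpa [Real.norm_eq_abs] using norm_integral_le_integral_norm (μ := C) f
    _ = (∫⁻ ω, ENNReal.ofReal |f ω| ∂C).toReal := by
        rw [integral_eq_lintegral_of_nonneg_ae (Filter.Eventually.of_forall fun ω => abs_nonneg _)
          (hf.abs.aestronglyMeasurable)]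
    _ ≤ _ := ENNReal.toReal_mono (by
        exact ENNReal.mul_ne_top (by simp [hc0]) hPfin) hCfin

end WCR

namespace WCR
variable {Ξ : Type*} [MeasurableSpace Ξ]

lemma toReal_mix (ε : ℝ) (hε0 : 0 ≤ ε) (hε1 : ε < 1) (μ ν : Measure Ξ)
    [IsProbabilityMeasure μ] [IsProbabilityMeasure ν] (A : Set Ξ) :
    ((ENNReal.ofReal (1 - ε) • μ + ENNReal.ofReal ε • ν) A).toReal
      = (1 - ε) * (μ A).toReal + ε * (ν A).toReal := by
  simp only [Measure.add_apply, Measure.smul_apply, smul_eq_mul]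
  rw [ENNReal.toReal_add (ENNReal.mul_ne_top ENNReal.ofReal_ne_top (measure_ne_top _ _))
    (ENNReal.mul_ne_top ENNReal.ofReal_ne_top (measure_ne_top _ _)),
    ENNReal.toReal_mul, ENNReal.toReal_mul, ENNReal.toReal_ofReal (by linarith),
    ENNReal.toReal_ofReal hε0]

lemma construct_Q {P C : Measure Ξ} [IsProbabilityMeasure P] {ε : ℝ} (hε0 : 0 ≤ ε) (hε1 : ε < 1)
    (hC : C ∈ revLVBall ε P) (ξ : Ξ) {f : Ξ → ℝ} (hf : Measurable f) (hfi : Integrable f P) :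
    ∃ Q : Measure Ξ, IsProbabilityMeasure Q ∧ TVdist Q P ≤ ε ∧
      eexp f Q = (((1 - ε) * ∫ ω, f ω ∂C + ε * f ξ : ℝ) : EReal) := by
  obtain ⟨hCp, R, hRp, hPeq⟩ := hC
  set Q := ENNReal.ofReal (1 - ε) • C + ENNReal.ofReal ε • Measure.dirac ξ with hQdef
  haveI hQp : IsProbabilityMeasure Q := by
    constructor
    simp only [hQdef, Measure.add_apply, Measure.smul_apply, smul_eq_mul, measure_univ, mul_one]
    rw [← ENNReal.ofReal_add (by linarith) hε0]
    simp
  refine ⟨Q, hQp, ?_, ?_⟩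
  · rw [tv_le_iff _ _ hε0]
    intro A hA
    have hQA : (Q A).toReal = (1 - ε) * (C A).toReal + ε * ((Measure.dirac ξ) A).toReal :=
      toReal_mix ε hε0 hε1 C (Measure.dirac ξ) A
    have hPA : (P A).toReal = (1 - ε) * (C A).toReal + ε * (R A).toReal := by
      rw [hPeq]; exact toReal_mix ε hε0 hε1 C R A
    rw [hQA, hPA]
    have hd1 : ((Measure.dirac ξ) A).toReal ≤ 1 := by
      simpa using ENNReal.toReal_mono ENNReal.one_ne_top (prob_le_one (μ := Measure.dirac ξ) (s := A))
    have hr1 : (R A).toReal ≤ 1 := by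
      simpa using ENNReal.toReal_mono ENNReal.one_ne_top (prob_le_one (μ := R) (s := A))
    have hd0 : 0 ≤ ((Measure.dirac ξ) A).toReal := ENNReal.toReal_nonneg
    have hr0 : 0 ≤ (R A).toReal := ENNReal.toReal_nonneg
    rw [abs_le]
    constructor <;> nlinarith
  · have hfiC : Integrable f C := integrable_of_smul_le hε1 (ball_smul_le ⟨hCp, R, hRp, hPeq⟩) hf hfi
    have hfid : Integrable f (Measure.dirac ξ) := by
      rw [integrable_iff_lintegrals hf]
      constructor <;> rw [lintegral_dirac' ξ (by fun_prop)] <;> exact ENNReal.ofReal_ne_top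
    have hfiQ : Integrable f Q :=
      (hfiC.smul_measure ENNReal.ofReal_ne_top).add_measure (hfid.smul_measure ENNReal.ofReal_ne_top)
    rw [eexp_eq_integral hf hfiQ, hQdef,
      integral_add_measure (hfiC.smul_measure ENNReal.ofReal_ne_top)
        (hfid.smul_measure ENNReal.ofReal_ne_top),
      integral_smul_measure, integral_smul_measure, integral_dirac' f ξ hf.stronglyMeasurable,
      ENNReal.toReal_ofReal (by linarith : (0:ℝ) ≤ 1 - ε), ENNReal.toReal_ofReal hε0]
    simp [smul_eq_mul]

end WCR

namespace WCR
variable {Ξ : Type*} [MeasurableSpace Ξ]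

lemma decompose {P Q : Measure Ξ} [IsProbabilityMeasure P] [IsProbabilityMeasure Q]
    {ε : ℝ} (hε0 : 0 < ε) (hε1 : ε < 1)
    (hTV : ∀ A : Set Ξ, MeasurableSet A → |(Q A).toReal - (P A).toReal| ≤ ε) :
    ∃ C S : Measure Ξ, C ∈ revLVBall ε P ∧ IsProbabilityMeasure S ∧
      Q = ENNReal.ofReal (1 - ε) • C + ENNReal.ofReal ε • S := by
  obtain ⟨s, hs, hsQP, hsPQ⟩ := hahn_decomposition (μ := P) (ν := Q)
  set ν : Measure Ξ := Q.restrict s + P.restrict sᶜ with hνdef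
  have hνapp : ∀ A : Set Ξ, MeasurableSet A → ν A = Q (A ∩ s) + P (A ∩ sᶜ) := by
    intro A hA
    simp [hνdef, Measure.restrict_apply hA]
  have hνP : ν ≤ P := by
    rw [Measure.le_iff]
    intro A hA
    rw [hνapp A hA]
    calc Q (A ∩ s) + P (A ∩ sᶜ) ≤ P (A ∩ s) + P (A ∩ sᶜ) :=
          add_le_add_left (hsQP _ (hA.inter hs) Set.inter_subset_right) _
      _ = P A := by rw [← Set.diff_eq, measure_inter_add_diff A hs]
  have hνQ : ν ≤ Q := by
    rw [Measure.le_iff]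
    intro A hA
    rw [hνapp A hA]
    calc Q (A ∩ s) + P (A ∩ sᶜ) ≤ Q (A ∩ s) + Q (A ∩ sᶜ) :=
          add_le_add_right (hsPQ _ (hA.inter hs.compl) Set.inter_subset_right) _
      _ = Q A := by rw [← Set.diff_eq, measure_inter_add_diff A hs]
  set m : ℝ≥0∞ := ν Set.univ with hmdef
  have hmfin : m ≠ ∞ := by
    have : m ≤ P Set.univ := Measure.le_iff.1 hνP _ MeasurableSet.univ
    rw [measure_univ] at this
    exact (lt_of_le_of_lt this ENNReal.one_lt_top).ne
  have hm1 : ENNReal.ofReal (1 - ε) ≤ m := by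
    have hνuniv : m = Q s + P sᶜ := by
      rw [hmdef, hνapp _ MeasurableSet.univ, Set.univ_inter, Set.univ_inter]
    have hPs : (P s).toReal + (P sᶜ).toReal = 1 := by
      rw [← ENNReal.toReal_add (measure_ne_top _ _) (measure_ne_top _ _),
        measure_add_measure_compl hs, measure_univ, ENNReal.toReal_one]
    have habs := hTV s hs
    have hQs : (P s).toReal - ε ≤ (Q s).toReal := by
      rw [abs_le] at habs; linarith [habs.1]
    have hmtr : m.toReal = (Q s).toReal + (P sᶜ).toReal := by
      rw [hνuniv, ENNReal.toReal_add (measure_ne_top _ _) (measure_ne_top _ _)]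
    exact ENNReal.ofReal_le_of_le_toReal (by rw [hmtr]; linarith)
  have hm0 : m ≠ 0 := by
    intro h
    rw [h, le_zero_iff, ENNReal.ofReal_eq_zero] at hm1
    linarith
  set C : Measure Ξ := m⁻¹ • ν with hCdef
  haveI hCp : IsProbabilityMeasure C := by
    constructor
    rw [hCdef, Measure.smul_apply, smul_eq_mul, ← hmdef, ENNReal.inv_mul_cancel hm0 hmfin]
  set κ : Measure Ξ := ENNReal.ofReal (1 - ε) • C with hκdef
  have hκν : κ ≤ ν := by
    rw [Measure.le_iff]
    intro A hA
    rw [hκdef, hCdef, Measure.smul_apply, Measure.smul_apply, smul_eq_mul, smul_eq_mul,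
      ← mul_assoc]
    calc ENNReal.ofReal (1 - ε) * m⁻¹ * ν A ≤ m * m⁻¹ * ν A :=
          mul_le_mul_left (mul_le_mul_left hm1 _) _
      _ = ν A := by rw [ENNReal.mul_inv_cancel hm0 hmfin, one_mul]
  have hκP : κ ≤ P := hκν.trans hνP
  have hκQ : κ ≤ Q := hκν.trans hνQ
  haveI hκfin : IsFiniteMeasure κ := by
    constructor
    calc κ Set.univ ≤ P Set.univ := Measure.le_iff.1 hκP _ MeasurableSet.univ
      _ < ⊤ := by rw [measure_univ]; exact ENNReal.one_lt_top
  have hεne : ENNReal.ofReal ε ≠ 0 := by simp [ENNReal.ofReal_eq_zero]; linarith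
  have hone : (1 : ℝ≥0∞) = ENNReal.ofReal ε + ENNReal.ofReal (1 - ε) := by
    rw [← ENNReal.ofReal_add hε0.le (by linarith)]
    norm_num
  have main : ∀ μ : Measure Ξ, IsProbabilityMeasure μ → κ ≤ μ →
      ∃ W : Measure Ξ, IsProbabilityMeasure W ∧
        μ = ENNReal.ofReal (1 - ε) • C + ENNReal.ofReal ε • W := by
    intro μ hμp hκμ
    have hsub : μ - κ + κ = μ := Measure.sub_add_cancel_of_le hκμ
    have hκuniv : κ Set.univ = ENNReal.ofReal (1 - ε) := by
      rw [hκdef, Measure.smul_apply, smul_eq_mul, measure_univ, mul_one]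
    have hmass : (μ - κ) Set.univ = ENNReal.ofReal ε := by
      rw [Measure.sub_apply MeasurableSet.univ hκμ, hκuniv, measure_univ]
      exact ENNReal.sub_eq_of_eq_add ENNReal.ofReal_ne_top hone
    refine ⟨(ENNReal.ofReal ε)⁻¹ • (μ - κ), ⟨?_⟩, ?_⟩
    · rw [Measure.smul_apply, smul_eq_mul, hmass,
        ENNReal.inv_mul_cancel hεne ENNReal.ofReal_ne_top]
    · have h2 : ENNReal.ofReal ε • (ENNReal.ofReal ε)⁻¹ • (μ - κ) = μ - κ := by
        rw [smul_smul, ENNReal.mul_inv_cancel hεne ENNReal.ofReal_ne_top, one_smul]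
      rw [h2, ← hκdef, add_comm]
      exact hsub.symm
  obtain ⟨R, hRp, hPdec⟩ := main P inferInstance hκP
  obtain ⟨S, hSp, hQdec⟩ := main Q inferInstance hκQ
  exact ⟨C, S, ⟨hCp, R, hRp, hPdec⟩, hSp, hQdec⟩

end WCR
/-- **Worst-case risk of a total-variation ball.**
For a probability measure `P`, `ε ∈ [0,1)`, and a measurable `P`-integrable `f`:
if `M := sup f < ∞`, then the supremum of `E_Q[f]` over probability measures `Q` with
`TV(Q,P) ≤ ε` equals `(1-ε)·sup_{C ∈ A^←_ε(P)} E_C[f] + ε·M`, where `A^←_ε(P)` is the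
reverse LV ball; moreover, if `sup f = +∞` and `ε > 0`, the left-hand supremum is `+∞`. -/
theorem worst_case_risk_TV
    {Ξ : Type*} [MeasurableSpace Ξ] [Nonempty Ξ]
    (P : Measure Ξ) [IsProbabilityMeasure P]
    (ε : ℝ) (hε0 : 0 ≤ ε) (hε1 : ε < 1)
    (f : Ξ → ℝ) (hf : Measurable f) (hfi : Integrable f P) :
    (BddAbove (Set.range f) →
      (⨆ Q : {Q : Measure Ξ // IsProbabilityMeasure Q ∧ TVdist Q P ≤ ε}, eexp f Q.1)
        = (((1 - ε) : ℝ) : EReal)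
            * (⨆ C : {C : Measure Ξ // C ∈ revLVBall ε P}, eexp f C.1)
          + ((ε : ℝ) : EReal) * (((⨆ ξ : Ξ, f ξ) : ℝ) : EReal))
    ∧ (¬ BddAbove (Set.range f) → 0 < ε →
      (⨆ Q : {Q : Measure Ξ // IsProbabilityMeasure Q ∧ TVdist Q P ≤ ε}, eexp f Q.1)
        = (⊤ : EReal)) := by
  have hPball := WCR.self_mem_ball P hε0 hε1
  have hfiP : Integrable f P := hfi
  constructor
  · -- bounded case
    intro hBdd
    set M := ⨆ ξ, f ξ with hMdef
    have hfM : ∀ ξ, f ξ ≤ M := fun ξ => le_ciSup hBdd ξ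
    set T := ⨆ C : {C : Measure Ξ // C ∈ revLVBall ε P}, eexp f C.1 with hTdef
    have heC : ∀ C : {C : Measure Ξ // C ∈ revLVBall ε P},
        eexp f C.1 = ((∫ ω, f ω ∂C.1 : ℝ) : EReal) :=
      fun C => WCR.eexp_eq_integral hf (WCR.integrable_of_smul_le hε1 (WCR.ball_smul_le C.2) hf hfi)
    set K := ((ENNReal.ofReal (1 - ε))⁻¹ * ∫⁻ ω, ENNReal.ofReal |f ω| ∂P).toReal with hKdef
    have hTle : T ≤ (K : EReal) := by
      refine iSup_le fun C => ?_
      rw [heC C]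
      exact EReal.coe_le_coe_iff.2
        ((abs_le.1 (WCR.abs_integral_le hε1 (WCR.ball_smul_le C.2) hf hfi)).2)
    have hTge : ((∫ ω, f ω ∂P : ℝ) : EReal) ≤ T := by
      have h := le_iSup (fun C : {C : Measure Ξ // C ∈ revLVBall ε P} => eexp f C.1)
        ⟨P, hPball⟩
      rwa [heC ⟨P, hPball⟩] at h
    have hTtop : T ≠ ⊤ := ne_top_of_le_ne_top (by simp) hTle
    have hTbot : T ≠ ⊥ := (lt_of_lt_of_le (EReal.bot_lt_coe _) hTge).ne'
    set t := T.toReal with htdef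
    have hTt : T = (t : EReal) := (EReal.coe_toReal hTtop hTbot).symm
    have hRHS : (((1 - ε) : ℝ) : EReal) * T + ((ε : ℝ) : EReal) * ((M : ℝ) : EReal)
        = (((1 - ε) * t + ε * M : ℝ) : EReal) := by
      rw [hTt, ← EReal.coe_mul, ← EReal.coe_mul, ← EReal.coe_add]
    rw [hRHS]
    set r := (1 - ε) * t + ε * M with hrdef
    have htP : ∫ ω, f ω ∂P ≤ t := by
      rw [hTt] at hTge; exact EReal.coe_le_coe_iff.1 hTge
    apply le_antisymm
    · -- sup over Q  ≤  r
      refine iSup_le ?_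
      rintro ⟨Q, hQp, hQtv⟩
      haveI := hQp
      rcases eq_or_lt_of_le hε0 with hε0' | hε0'
      · -- ε = 0
        have hQP : Q = P := by
          refine Measure.ext fun A hA => ?_
          have h1 := (WCR.tv_le_iff Q P hε0).1 hQtv A hA
          rw [← hε0'] at h1
          have h2 : (Q A).toReal = (P A).toReal := by
            have := abs_nonpos_iff.1 h1
            linarith [sub_eq_zero.1 this]
          exact (ENNReal.toReal_eq_toReal_iff' (measure_ne_top _ _) (measure_ne_top _ _)).1 h2
        have hEQ : eexp f Q = ((∫ ω, f ω ∂P : ℝ) : EReal) := by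
          rw [hQP, WCR.eexp_eq_integral hf hfi]
        show eexp f Q ≤ _
        rw [hEQ]
        refine le_trans (EReal.coe_le_coe_iff.2 htP) (EReal.coe_le_coe_iff.2 ?_)
        rw [hrdef, ← hε0']; ring_nf; exact le_refl t
      · -- ε > 0
        obtain ⟨C, S, hCball, hSp, hQdec⟩ :=
          WCR.decompose hε0' hε1 ((WCR.tv_le_iff Q P hε0).1 hQtv)
        haveI := hSp
        haveI := hCball.1
        have hεne : ENNReal.ofReal ε ≠ 0 := by
          simp only [ne_eq, ENNReal.ofReal_eq_zero, not_le]; linarith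
        by_cases hbS : ∫⁻ ω, ENNReal.ofReal (-f ω) ∂S = ∞
        · have hbot : ∫⁻ ω, ENNReal.ofReal (-f ω) ∂Q = ∞ := by
            show ∫⁻ ω, ENNReal.ofReal (-f ω) ∂(Q : Measure Ξ) = ∞
            rw [hQdec, lintegral_add_measure, lintegral_smul_measure, lintegral_smul_measure,
              hbS, smul_eq_mul, smul_eq_mul, ENNReal.mul_top hεne]
            simp
          show eexp f Q ≤ _
          rw [WCR.eexp_eq_bot hbot]
          exact bot_le
        · have haS : ∫⁻ ω, ENNReal.ofReal (f ω) ∂S ≠ ∞ := by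
            have hb : ∫⁻ ω, ENNReal.ofReal (f ω) ∂S ≤ ENNReal.ofReal M := by
              calc ∫⁻ ω, ENNReal.ofReal (f ω) ∂S ≤ ∫⁻ _, ENNReal.ofReal M ∂S :=
                    lintegral_mono fun ω => ENNReal.ofReal_le_ofReal (hfM ω)
                _ = ENNReal.ofReal M := by rw [lintegral_const, measure_univ, mul_one]
            exact (lt_of_le_of_lt hb ENNReal.ofReal_lt_top).ne
          have hfiS : Integrable f S := (WCR.integrable_iff_lintegrals hf).2 ⟨haS, hbS⟩
          have hfiC : Integrable f C :=
            WCR.integrable_of_smul_le hε1 (WCR.ball_smul_le hCball) hf hfi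
          have hfiQ : Integrable f Q := by
            show Integrable f (Q : Measure Ξ)
            rw [hQdec]
            exact (hfiC.smul_measure ENNReal.ofReal_ne_top).add_measure
              (hfiS.smul_measure ENNReal.ofReal_ne_top)
          show eexp f Q ≤ _
          rw [WCR.eexp_eq_integral hf hfiQ]
          refine EReal.coe_le_coe_iff.2 ?_
          have hIQ : ∫ ω, f ω ∂Q = (1 - ε) * ∫ ω, f ω ∂C + ε * ∫ ω, f ω ∂S := by
            rw [hQdec, integral_add_measure (hfiC.smul_measure ENNReal.ofReal_ne_top)
                (hfiS.smul_measure ENNReal.ofReal_ne_top),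
              integral_smul_measure, integral_smul_measure,
              ENNReal.toReal_ofReal (by linarith : (0:ℝ) ≤ 1 - ε), ENNReal.toReal_ofReal hε0]
            simp [smul_eq_mul]
          have hC_le : ∫ ω, f ω ∂C ≤ t := by
            have h := le_iSup (fun C : {C : Measure Ξ // C ∈ revLVBall ε P} => eexp f C.1)
              ⟨C, hCball⟩
            rw [heC ⟨C, hCball⟩] at h
            have h2 : ((∫ ω, f ω ∂C : ℝ) : EReal) ≤ T := h
            rw [hTt] at h2
            exact EReal.coe_le_coe_iff.1 h2
          have hS_le : ∫ ω, f ω ∂S ≤ M := by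
            calc ∫ ω, f ω ∂S ≤ ∫ _, M ∂S := integral_mono hfiS (integrable_const M) hfM
              _ = M := by simp [integral_const, measure_univ]
          rw [hIQ, hrdef]
          nlinarith [hC_le, hS_le, hε0, hε0']
    · -- r ≤ sup over Q
      refine le_of_forall_lt fun c hc => ?_
      induction c using EReal.rec with
      | bot =>
        obtain ⟨Q, hQp, hQtv, hQval⟩ :=
          WCR.construct_Q hε0 hε1 hPball (Classical.arbitrary Ξ) hf hfi
        refine lt_of_lt_of_le ?_
          (le_iSup (fun Q : {Q : Measure Ξ // IsProbabilityMeasure Q ∧ TVdist Q P ≤ ε} =>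
            eexp f Q.1) ⟨Q, hQp, hQtv⟩)
        rw [hQval]
        exact EReal.bot_lt_coe _
      | coe y =>
        have hy : y < r := EReal.coe_lt_coe_iff.1 hc
        set δ := (r - y) / 2 with hδdef
        have hδpos : 0 < δ := by rw [hδdef]; linarith
        obtain ⟨C, hCgt⟩ := lt_iSup_iff.1
          (show ((t - δ : ℝ) : EReal) < T by
            rw [hTt]; exact EReal.coe_lt_coe_iff.2 (by linarith))
        rw [heC C] at hCgt
        have hCgt' : t - δ < ∫ ω, f ω ∂C.1 := EReal.coe_lt_coe_iff.1 hCgt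
        obtain ⟨ξ, hξ⟩ := exists_lt_of_lt_ciSup
          (show M - δ < ⨆ ξ, f ξ by rw [← hMdef]; linarith)
        obtain ⟨Q, hQp, hQtv, hQval⟩ := WCR.construct_Q hε0 hε1 C.2 ξ hf hfi
        refine lt_of_lt_of_le ?_
          (le_iSup (fun Q : {Q : Measure Ξ // IsProbabilityMeasure Q ∧ TVdist Q P ≤ ε} =>
            eexp f Q.1) ⟨Q, hQp, hQtv⟩)
        rw [hQval]
        refine EReal.coe_lt_coe_iff.2 ?_
        nlinarith [hCgt', hξ, hε0, hε1]
      | top => exact absurd hc (not_top_lt)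
  · -- unbounded case
    intro hBdd hεpos
    rw [eq_top_iff]
    refine le_of_forall_lt fun c hc => ?_
    induction c using EReal.rec with
    | bot =>
      obtain ⟨Q, hQp, hQtv, hQval⟩ :=
        WCR.construct_Q hε0 hε1 hPball (Classical.arbitrary Ξ) hf hfi
      refine lt_of_lt_of_le ?_
        (le_iSup (fun Q : {Q : Measure Ξ // IsProbabilityMeasure Q ∧ TVdist Q P ≤ ε} =>
          eexp f Q.1) ⟨Q, hQp, hQtv⟩)
      rw [hQval]
      exact EReal.bot_lt_coe _
    | coe y =>
      obtain ⟨z, ⟨ξ, rfl⟩, hz⟩ := not_bddAbove_iff.1 hBdd ((y - (1 - ε) * ∫ ω, f ω ∂P) / ε)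
      obtain ⟨Q, hQp, hQtv, hQval⟩ := WCR.construct_Q hε0 hε1 hPball ξ hf hfi
      refine lt_of_lt_of_le ?_
        (le_iSup (fun Q : {Q : Measure Ξ // IsProbabilityMeasure Q ∧ TVdist Q P ≤ ε} =>
          eexp f Q.1) ⟨Q, hQp, hQtv⟩)
      rw [hQval]
      refine EReal.coe_lt_coe_iff.2 ?_
      have h1 : (y - (1 - ε) * ∫ ω, f ω ∂P) / ε * ε = y - (1 - ε) * ∫ ω, f ω ∂P := by
        field_simp
      nlinarith [hz, hεpos]
    | top => exact absurd hc (not_top_lt)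
end

section
/- Let Z₁,…,Z_m be identically distributed real-valued random variables with common cumulative distribution function F, let F_m(t) := (1/m)·#{j ≤ m : Z_j ≤ t} be the empirical CDF, let δ ∈ (0,1), set r := sqrt(log(2/δ)/(2m)), and assume the Dvoretzky–Kiefer–Wolfowitz concentration event E := {sup_{t ∈ ℝ} |F_m(t) − F(t)| ≤ r} has probability at least 1−δ. Let γ ∈ (0,1) with γ ≥ r, define the lower envelope L(t) := max(F_m(t) − r, 0) and the threshold t̂ := inf{t : L(t) ≥ 1−γ}. Then the set {t : L(t) ≥ 1−γ} is nonempty (so t̂ is well defined), on E one has F(t̂) ≥ 1−γ, and consequently Pr{F(t̂) ≥ 1−γ} ≥ 1−δ. -/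
open MeasureTheory
open scoped ENNReal

/-- **High-probability bulk-mass certificate via DKW selection.**
Let `Z₁,…,Z_m` be identically distributed real random variables with common CDF `F`,
`F_m` the empirical CDF, `r = sqrt(log(2/δ)/(2m))`, and assume the DKW event
`E = {sup_t |F_m(t) - F(t)| ≤ r}` has probability at least `1-δ`. If `γ ∈ (0,1)` with
`γ ≥ r`, `L(t) = max(F_m(t) - r, 0)` and `t̂ = inf{t : L(t) ≥ 1-γ}`, then the threshold
set is nonempty, `F(t̂) ≥ 1-γ` on `E`, and hence `Pr{F(t̂) ≥ 1-γ} ≥ 1-δ`. -/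
theorem dkw_bulk_mass_certificate
    {Ω : Type*} [MeasurableSpace Ω] (μ : Measure Ω) [IsProbabilityMeasure μ]
    (m : ℕ) (hm : 0 < m)
    (Z : Fin m → Ω → ℝ) (hZ : ∀ j, Measurable (Z j))
    (F : ℝ → ℝ) (hF : ∀ j t, F t = (μ {ω | Z j ω ≤ t}).toReal)
    (δ : ℝ) (hδ0 : 0 < δ) (hδ1 : δ < 1)
    (Fm : Ω → ℝ → ℝ)
    (hFm : ∀ ω t, Fm ω t = (Nat.card {j : Fin m // Z j ω ≤ t} : ℝ) / m)
    (r : ℝ) (hr : r = Real.sqrt (Real.log (2 / δ) / (2 * m)))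
    (E : Set Ω) (hE : E = {ω | ∀ t : ℝ, |Fm ω t - F t| ≤ r})
    (hEprob : ENNReal.ofReal (1 - δ) ≤ μ E)
    (γ : ℝ) (hγ0 : 0 < γ) (hγ1 : γ < 1) (hγr : r ≤ γ)
    (L : Ω → ℝ → ℝ) (hL : ∀ ω t, L ω t = max (Fm ω t - r) 0)
    (that : Ω → ℝ) (hthat : ∀ ω, that ω = sInf {t : ℝ | 1 - γ ≤ L ω t}) :
    (∀ ω : Ω, {t : ℝ | 1 - γ ≤ L ω t}.Nonempty)
    ∧ (∀ ω ∈ E, 1 - γ ≤ F (that ω))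
    ∧ ENNReal.ofReal (1 - δ) ≤ μ {ω | 1 - γ ≤ F (that ω)} := by
  classical
  have hr0 : 0 ≤ r := hr ▸ Real.sqrt_nonneg _
  set c : ℝ := 1 - γ + r with hc
  have hc0 : 0 < c := by simp only [hc]; linarith
  have hc1 : c ≤ 1 := by simp only [hc]; linarith
  have hFinm : Nonempty (Fin m) := ⟨⟨0, hm⟩⟩
  have hm0 : (0 : ℝ) < m := by exact_mod_cast hm
  -- monotonicity of Fm ω
  have hmono : ∀ ω s t, s ≤ t → Fm ω s ≤ Fm ω t := by
    intro ω s t hst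
    rw [hFm, hFm]
    gcongr
    exact_mod_cast Nat.card_mono (Set.toFinite {j : Fin m | Z j ω ≤ t})
      (fun j hj => le_trans hj hst)
  -- membership in S reformulated
  have hSmem : ∀ ω t, (1 - γ ≤ L ω t) ↔ c ≤ Fm ω t := by
    intro ω t
    rw [hL]
    constructor
    · intro h
      rcases le_max_iff.1 h with h' | h'
      · simp only [hc]; linarith
      · linarith
    · intro h
      exact le_max_iff.2 (Or.inl (by simp only [hc] at h; linarith))
  -- Fm at the max of all Z j ω equals 1
  have hSne : ∀ ω : Ω, {t : ℝ | 1 - γ ≤ L ω t}.Nonempty := by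
    intro ω
    refine ⟨Finset.univ.sup' Finset.univ_nonempty (fun j => Z j ω), ?_⟩
    rw [Set.mem_setOf_eq, hSmem]
    have hall : ∀ j : Fin m, Z j ω ≤ Finset.univ.sup' Finset.univ_nonempty (fun j => Z j ω) :=
      fun j => Finset.le_sup' (fun j => Z j ω) (Finset.mem_univ j)
    have hcard : Nat.card {j : Fin m // Z j ω ≤ Finset.univ.sup' Finset.univ_nonempty
        (fun j => Z j ω)} = m := by
      rw [Nat.card_eq_fintype_card, Fintype.card_subtype]
      rw [Finset.filter_true_of_mem (fun j _ => hall j), Finset.card_univ, Fintype.card_fin]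
    rw [hFm, hcard, div_self (ne_of_gt hm0)]
    exact hc1
  -- if Fm ω t > 0 then some Z j ω ≤ t
  have hwit : ∀ ω t, 0 < Fm ω t → ∃ j : Fin m, Z j ω ≤ t := by
    intro ω t ht
    rw [hFm] at ht
    have : Nat.card {j : Fin m // Z j ω ≤ t} ≠ 0 := by
      intro h0
      rw [h0] at ht
      simp at ht
    obtain ⟨⟨j, hj⟩⟩ := Nat.card_ne_zero.1 this |>.1
    exact ⟨j, hj⟩
  -- lower bound of S
  have hbdd : ∀ ω : Ω, BddBelow {t : ℝ | 1 - γ ≤ L ω t} := by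
    intro ω
    refine ⟨Finset.univ.inf' Finset.univ_nonempty (fun j => Z j ω), fun t ht => ?_⟩
    rw [Set.mem_setOf_eq, hSmem] at ht
    obtain ⟨j, hj⟩ := hwit ω t (lt_of_lt_of_le hc0 ht)
    exact le_trans (Finset.inf'_le _ (Finset.mem_univ j)) hj
  -- the key step: Fm ω (that ω) ≥ c
  have hkey : ∀ ω : Ω, c ≤ Fm ω (that ω) := by
    intro ω
    have hge : ∀ ε : ℝ, 0 < ε → c ≤ Fm ω (that ω + ε) := by
      intro ε hε
      have hlt : sInf {t : ℝ | 1 - γ ≤ L ω t} < that ω + ε := by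
        rw [← hthat]; linarith
      obtain ⟨s, hsS, hs⟩ := (csInf_lt_iff (hbdd ω) (hSne ω)).1 hlt
      exact le_trans ((hSmem ω s).1 hsS) (hmono ω s _ hs.le)
    by_cases hT : (Finset.univ.filter (fun j => that ω < Z j ω)).Nonempty
    · set T := Finset.univ.filter (fun j => that ω < Z j ω) with hTdef
      set ε : ℝ := T.inf' hT (fun j => Z j ω) - that ω with hεdef
      have hε0 : 0 < ε := by
        obtain ⟨j, hjT, hjval⟩ := Finset.exists_mem_eq_inf' hT (fun j => Z j ω)
        have := (Finset.mem_filter.1 hjT).2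
        simp only [hεdef, hjval]
        linarith
      have hsets : ∀ j : Fin m, Z j ω ≤ that ω + ε / 2 ↔ Z j ω ≤ that ω := by
        intro j
        constructor
        · intro h
          by_contra hcon
          push_neg at hcon
          have hjT : j ∈ T := Finset.mem_filter.2 ⟨Finset.mem_univ j, hcon⟩
          have : T.inf' hT (fun j => Z j ω) ≤ Z j ω := Finset.inf'_le _ hjT
          simp only [hεdef] at h hε0
          linarith
        · intro h; linarith
      have hcardeq : Nat.card {j : Fin m // Z j ω ≤ that ω + ε / 2}
          = Nat.card {j : Fin m // Z j ω ≤ that ω} :=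
        Nat.card_congr (Equiv.subtypeEquivRight hsets)
      have := hge (ε / 2) (by linarith)
      rwa [hFm, hcardeq, ← hFm] at this
    · -- all Z j ω ≤ that ω, so Fm ω (that ω) = 1
      have hall : ∀ j : Fin m, Z j ω ≤ that ω := by
        intro j
        by_contra hcon
        push_neg at hcon
        exact hT ⟨j, Finset.mem_filter.2 ⟨Finset.mem_univ j, hcon⟩⟩
      have hcard : Nat.card {j : Fin m // Z j ω ≤ that ω} = m := by
        rw [Nat.card_eq_fintype_card, Fintype.card_subtype]
        rw [Finset.filter_true_of_mem (fun j _ => hall j), Finset.card_univ, Fintype.card_fin]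
      rw [hFm, hcard, div_self (ne_of_gt hm0)]
      exact hc1
  -- on E, F (that ω) ≥ 1 - γ
  have hEpart : ∀ ω ∈ E, 1 - γ ≤ F (that ω) := by
    intro ω hω
    rw [hE] at hω
    have habs := hω (that ω)
    have h1 := (abs_le.1 habs).2
    have h2 := hkey ω
    simp only [hc] at h2
    linarith
  refine ⟨hSne, hEpart, ?_⟩
  refine le_trans hEprob (measure_mono ?_)
  intro ω hω
  exact hEpart ω hω
end

section
/- Let k ≥ 1 and let P⋆ be a probability measure on a measurable space Ξ. For each i ∈ {1,…,k}, let s_i : Ξ → ℝ be measurable, let Z_{i,1},…,Z_{i,m} with Z_{i,j} := s_i(ξ̃_j) for common samples ξ̃₁,…,ξ̃_m from P⋆, let F_i(t) := P⋆{s_i ≤ t}, let F_{i,m} be the empirical CDF of (Z_{i,j})_{j≤m}, let δ_i, γ_i ∈ (0,1) with γ_i ≥ r_i := sqrt(log(2/δ_i)/(2m)), and assume each event A_i := {sup_t |F_{i,m}(t) − F_i(t)| ≤ r_i} has probability at least 1−δ_i. Define L_i(t) := max(F_{i,m}(t) − r_i, 0), t̂_i := inf{t : L_i(t) ≥ 1−γ_i},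 and the intersection bulk set Ξ̂₀ := ∩_{i=1}^k {ξ : s_i(ξ) ≤ t̂_i}. Then with probability at least 1 − Σ_{i=1}^k δ_i, P⋆(Ξ̂₀) ≥ 1 − Σ_{i=1}^k γ_i. -/
open MeasureTheory
open scoped ENNReal

section DKWHelpers
variable {m : ℕ}

lemma dkw_card_sum (P : Fin m → Prop) [DecidablePred P] :
    (Nat.card {j : Fin m // P j} : ℝ) = ∑ j : Fin m, if P j then (1:ℝ) else 0 := by
  rw [Nat.card_eq_fintype_card, Fintype.card_subtype, Finset.card_filter]
  push_cast
  simp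

lemma dkw_card_congr {P Q : Fin m → Prop} (h : ∀ j, P j ↔ Q j) :
    Nat.card {j : Fin m // P j} = Nat.card {j : Fin m // Q j} :=
  Nat.card_congr (Equiv.subtypeEquivRight h)

lemma dkw_card_all {P : Fin m → Prop} (h : ∀ j, P j) :
    Nat.card {j : Fin m // P j} = m := by
  rw [Nat.card_congr (Equiv.subtypeUnivEquiv h), Nat.card_eq_fintype_card, Fintype.card_fin]

lemma dkw_card_none {P : Fin m → Prop} (h : ∀ j, ¬ P j) :
    Nat.card {j : Fin m // P j} = 0 := by
  have : IsEmpty {j : Fin m // P j} := ⟨fun x => h x.1 x.2⟩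
  exact Nat.card_of_isEmpty

/-- Local constancy of the empirical count to the right of any point. -/
lemma dkw_right_const (Z : Fin m → ℝ) (t : ℝ) :
    ∃ t', t < t' ∧ ∀ u, t ≤ u → u < t' → ∀ j, (Z j ≤ u ↔ Z j ≤ t) := by
  classical
  by_cases h : ∃ j, t < Z j
  · obtain ⟨j0, hj0⟩ := h
    have hne : ((Finset.univ.filter (fun j => t < Z j)).image Z).Nonempty :=
      ⟨Z j0, Finset.mem_image_of_mem Z (by simp [hj0])⟩
    set t' := ((Finset.univ.filter (fun j => t < Z j)).image Z).min' hne with ht'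
    have htt' : t < t' := by
      obtain ⟨j1, hj1, hj1'⟩ := Finset.mem_image.mp
        (((Finset.univ.filter (fun j => t < Z j)).image Z).min'_mem hne)
      rw [ht', ← hj1']
      exact (Finset.mem_filter.mp hj1).2
    refine ⟨t', htt', fun u hu hu' j => ⟨fun hle => ?_, fun hle => le_trans hle hu⟩⟩
    by_contra hnot
    push_neg at hnot
    have : t' ≤ Z j := Finset.min'_le _ _ (Finset.mem_image_of_mem Z (by simp [hnot]))
    linarith
  · push_neg at h
    exact ⟨t + 1, by linarith, fun u hu _ j => ⟨fun _ => h j, fun hle => le_trans hle hu⟩⟩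

/-- The empirical CDF reaches level `c` at the infimum threshold. -/
lemma dkw_sInf_ge (hm : 0 < m) (Z : Fin m → ℝ) (g : ℝ → ℝ)
    (hg : ∀ t, g t = (Nat.card {j : Fin m // Z j ≤ t} : ℝ) / m)
    (c : ℝ) (hc0 : 0 < c) (hc1 : c ≤ 1) :
    c ≤ g (sInf {t | c ≤ g t}) := by
  have hmR : (0:ℝ) < m := by exact_mod_cast hm
  have : Nonempty (Fin m) := ⟨⟨0, hm⟩⟩
  set S := {t | c ≤ g t} with hS
  obtain ⟨j0, hj0⟩ := Finite.exists_max Z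
  have hne : S.Nonempty := by
    refine ⟨Z j0, ?_⟩
    have : g (Z j0) = 1 := by
      rw [hg, dkw_card_all (fun j => hj0 j)]
      field_simp
    simpa [hS, this] using hc1
  obtain ⟨j1, hj1⟩ := Finite.exists_min Z
  have hbdd : BddBelow S := by
    refine ⟨Z j1 - 1, fun t ht => ?_⟩
    by_contra hlt
    push_neg at hlt
    have hzero : g t = 0 := by
      rw [hg, dkw_card_none (fun j hle => by have := hj1 j; linarith)]
      simp
    have : c ≤ g t := ht
    rw [hzero] at this
    linarith
  obtain ⟨t', htt', hconst⟩ := dkw_right_const Z (sInf S)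
  obtain ⟨t, htS, htlt⟩ := (csInf_lt_iff hbdd hne).mp htt'
  have hts : sInf S ≤ t := csInf_le hbdd htS
  have : g t = g (sInf S) := by
    rw [hg, hg, dkw_card_congr (fun j => hconst t hts htlt j)]
  rw [← this]
  exact htS

end DKWHelpers

lemma dkw_compl_le {α : Type*} [MeasurableSpace α] (μ : Measure α) [IsProbabilityMeasure μ]
    {s : Set α} (hs : MeasurableSet s) {d : ℝ} (hd : 0 ≤ d)
    (h : ENNReal.ofReal (1 - d) ≤ μ s) : μ sᶜ ≤ ENNReal.ofReal d := by
  rw [prob_compl_eq_one_sub hs]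
  refine tsub_le_iff_right.mpr ?_
  by_cases h1 : d ≤ 1
  · calc (1:ℝ≥0∞) = ENNReal.ofReal d + ENNReal.ofReal (1-d) := by
          rw [← ENNReal.ofReal_add hd (by linarith)]; norm_num
      _ ≤ ENNReal.ofReal d + μ s := by gcongr
  · exact le_add_right (ENNReal.one_le_ofReal.mpr (le_of_not_ge h1))

lemma dkw_lower {α : Type*} [MeasurableSpace α] (μ : Measure α) [IsProbabilityMeasure μ]
    {U : Set α} (hU : MeasurableSet U) {x : ℝ}
    (hx : 0 ≤ x) (h : μ U ≤ ENNReal.ofReal x) : ENNReal.ofReal (1 - x) ≤ μ Uᶜ := by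
  rw [prob_compl_eq_one_sub hU]
  by_cases h1 : x ≤ 1
  · refine ENNReal.le_sub_of_add_le_right (ne_top_of_le_ne_top ENNReal.ofReal_ne_top h) ?_
    calc ENNReal.ofReal (1-x) + μ U ≤ ENNReal.ofReal (1-x) + ENNReal.ofReal x := by gcongr
      _ = 1 := by rw [← ENNReal.ofReal_add (by linarith) hx]; norm_num
  · simp [ENNReal.ofReal_eq_zero.mpr (by linarith : 1 - x ≤ 0)]

/-- **Blockwise bulk-mass certificate via DKW score selection.**
For `k` measurable scores `s_i` evaluated on common samples `ξ̃₁,…,ξ̃_m` from `P⋆`,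
with per-block CDFs `F_i`, empirical CDFs `F_{i,m}`, DKW radii `r_i ≥` satisfying
`γ_i ≥ r_i`, and assuming each DKW event `A_i` has probability at least `1-δ_i`,
the intersection bulk set `Ξ̂₀ = ∩_i {ξ : s_i(ξ) ≤ t̂_i}` satisfies
`P⋆(Ξ̂₀) ≥ 1 - Σ_i γ_i` with probability at least `1 - Σ_i δ_i`. -/
theorem blockwise_dkw_bulk_mass_certificate
    {Ω Ξ : Type*} [MeasurableSpace Ω] [MeasurableSpace Ξ]
    (ν : Measure Ω) [IsProbabilityMeasure ν]
    (Pstar : Measure Ξ) [IsProbabilityMeasure Pstar]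
    (k m : ℕ) (hk : 1 ≤ k) (hm : 0 < m)
    (xi : Fin m → Ω → Ξ) (hxi : ∀ j, Measurable (xi j))
    (hlaw : ∀ j, Measure.map (xi j) ν = Pstar)
    (s : Fin k → Ξ → ℝ) (hs : ∀ i, Measurable (s i))
    (F : Fin k → ℝ → ℝ) (hF : ∀ i t, F i t = (Pstar {x | s i x ≤ t}).toReal)
    (Fm : Fin k → Ω → ℝ → ℝ)
    (hFm : ∀ i ω t, Fm i ω t = (Nat.card {j : Fin m // s i (xi j ω) ≤ t} : ℝ) / m)
    (δ γ : Fin k → ℝ)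
    (hδ : ∀ i, 0 < δ i ∧ δ i < 1) (hγ : ∀ i, 0 < γ i ∧ γ i < 1)
    (r : Fin k → ℝ) (hr : ∀ i, r i = Real.sqrt (Real.log (2 / δ i) / (2 * m)))
    (hγr : ∀ i, r i ≤ γ i)
    (A : Fin k → Set Ω) (hA : ∀ i, A i = {ω | ∀ t : ℝ, |Fm i ω t - F i t| ≤ r i})
    (hAprob : ∀ i, ENNReal.ofReal (1 - δ i) ≤ ν (A i))
    (L : Fin k → Ω → ℝ → ℝ) (hL : ∀ i ω t, L i ω t = max (Fm i ω t - r i) 0)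
    (that : Fin k → Ω → ℝ)
    (hthat : ∀ i ω, that i ω = sInf {t : ℝ | 1 - γ i ≤ L i ω t}) :
    ENNReal.ofReal (1 - ∑ i, δ i)
      ≤ ν {ω | ENNReal.ofReal (1 - ∑ i, γ i)
            ≤ Pstar (⋂ i, {x | s i x ≤ that i ω})} := by
  classical
  -- measurability of ω ↦ Fm i ω t
  have hFmMeas : ∀ i (t : ℝ), Measurable (fun ω => Fm i ω t) := by
    intro i t
    have heq : (fun ω => Fm i ω t)
        = fun ω => (∑ j : Fin m, if s i (xi j ω) ≤ t then (1:ℝ) else 0) / m := by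
      funext ω; rw [hFm, dkw_card_sum]
    rw [heq]
    refine Measurable.div_const ?_ _
    refine Finset.measurable_sum _ fun j _ => ?_
    exact Measurable.ite (measurableSet_le ((hs i).comp (hxi j)) measurable_const)
      measurable_const measurable_const
  -- monotonicity of F
  have hFmono : ∀ i, Monotone (F i) := by
    intro i a b hab
    rw [hF, hF]
    exact ENNReal.toReal_mono (measure_ne_top _ _)
      (measure_mono fun x hx => le_trans hx hab)
  -- right continuity of F (ε form)
  have hFcont : ∀ i (t ε : ℝ), 0 < ε → ∃ u, t < u ∧ F i u ≤ F i t + ε := by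
    intro i t ε hε
    have hAnti : Antitone (fun n : ℕ => {x | s i x ≤ t + 1/(n+1)}) := by
      intro a b hab x hx
      simp only [Set.mem_setOf_eq] at hx ⊢
      have hinv : (1:ℝ)/(b+1) ≤ 1/(a+1) := by
        apply one_div_le_one_div_of_le
        · positivity
        · have : (a:ℝ) ≤ b := by exact_mod_cast hab
          linarith
      linarith
    have hInter : (⋂ n : ℕ, {x | s i x ≤ t + 1/(n+1)}) = {x | s i x ≤ t} := by
      ext x
      simp only [Set.mem_iInter, Set.mem_setOf_eq]
      constructor
      · intro h
        by_contra hlt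
        push_neg at hlt
        obtain ⟨n, hn⟩ := exists_nat_one_div_lt (show 0 < s i x - t by linarith)
        have := h n
        linarith
      · intro h n
        have : (0:ℝ) < 1/(n+1) := by positivity
        linarith
    have htend := MeasureTheory.tendsto_measure_iInter_atTop (μ := Pstar)
      (s := fun n : ℕ => {x | s i x ≤ t + 1/(n+1)})
      (fun n => ((hs i) measurableSet_Iic).nullMeasurableSet) hAnti
      ⟨0, measure_ne_top _ _⟩
    rw [hInter] at htend
    have htoReal : Filter.Tendsto (fun n : ℕ => F i (t + 1/(n+1))) Filter.atTop
        (nhds (F i t)) := by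
      have := (ENNReal.tendsto_toReal (measure_ne_top Pstar {x | s i x ≤ t})).comp htend
      convert this using 1
      · funext n; rw [hF]; rfl
      · rw [hF]
    have hev : ∀ᶠ n : ℕ in Filter.atTop, F i (t + 1/(n+1)) < F i t + ε :=
      htoReal.eventually_lt_const (by linarith)
    obtain ⟨n, hn⟩ := hev.exists
    have hpos : (0:ℝ) < 1/(n+1) := by positivity
    refine ⟨t + 1/(n+1), by linarith, le_of_lt hn⟩
  -- the key per-block, per-sample bound on the chosen threshold
  have hkey : ∀ i ω, ω ∈ A i →
      ENNReal.ofReal (1 - γ i) ≤ Pstar {x | s i x ≤ that i ω} := by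
    intro i ω hω
    have hrpos : 0 ≤ r i := by rw [hr]; exact Real.sqrt_nonneg _
    have hγ1 := (hγ i).1
    have hγ2 := (hγ i).2
    have hγri := hγr i
    set c := 1 - γ i + r i with hc
    have hSeq : {t : ℝ | 1 - γ i ≤ L i ω t} = {t | c ≤ Fm i ω t} := by
      ext t
      simp only [Set.mem_setOf_eq, hL]
      constructor
      · intro h
        rcases le_max_iff.mp h with h' | h'
        · linarith
        · linarith
      · intro h
        exact le_max_of_le_left (by linarith)
    have hinf := dkw_sInf_ge hm (fun j => s i (xi j ω)) (Fm i ω)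
      (fun t => hFm i ω t) c (by linarith) (by linarith)
    have hthat' : that i ω = sInf {t | c ≤ Fm i ω t} := by rw [hthat, hSeq]
    have hA' : |Fm i ω (that i ω) - F i (that i ω)| ≤ r i := by
      rw [hA] at hω
      exact hω (that i ω)
    have habs := abs_le.mp hA'
    have hcF : c ≤ Fm i ω (that i ω) := by rw [hthat']; exact hinf
    have h1 : 1 - γ i ≤ F i (that i ω) := by linarith [habs.1]
    rw [hF i (that i ω)] at h1
    exact ENNReal.ofReal_le_of_le_toReal h1
  -- measurability of A i via rationals
  have hAmeas : ∀ i, MeasurableSet (A i) := by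
    intro i
    have hAeq : A i = ⋂ q : ℚ, {ω | |Fm i ω q - F i q| ≤ r i} := by
      rw [hA]
      ext ω
      simp only [Set.mem_setOf_eq, Set.mem_iInter]
      constructor
      · exact fun h q => h q
      · intro h t
        rw [abs_le]
        constructor
        · -- F t ≤ Fm t + r
          obtain ⟨t', htt', hconst⟩ := dkw_right_const (fun j => s i (xi j ω)) t
          obtain ⟨q, hq1, hq2⟩ := exists_rat_btwn htt'
          have hFmq : Fm i ω q = Fm i ω t := by
            rw [hFm, hFm, dkw_card_congr (fun j => hconst q (le_of_lt hq1) hq2 j)]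
          have habs := abs_le.mp (h q)
          have hFle : F i t ≤ F i q := hFmono i (le_of_lt hq1)
          linarith [habs.1]
        · -- Fm t ≤ F t + r, via ε
          have hε : ∀ ε, 0 < ε → Fm i ω t - F i t ≤ r i + ε := by
            intro ε hε
            obtain ⟨u, htu, hu⟩ := hFcont i t ε hε
            obtain ⟨t', htt', hconst⟩ := dkw_right_const (fun j => s i (xi j ω)) t
            obtain ⟨q, hq1, hq2⟩ := exists_rat_btwn (lt_min htu htt')
            have hqu : (q:ℝ) < u := lt_of_lt_of_le hq2 (min_le_left _ _)
            have hqt' : (q:ℝ) < t' := lt_of_lt_of_le hq2 (min_le_right _ _)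
            have hFmq : Fm i ω q = Fm i ω t := by
              rw [hFm, hFm, dkw_card_congr (fun j => hconst q (le_of_lt hq1) hqt' j)]
            have habs := abs_le.mp (h q)
            have hFle : F i q ≤ F i u := hFmono i (le_of_lt hqu)
            linarith [habs.2]
          have := le_of_forall_pos_le_add (fun ε hε' => (hε ε hε').trans_eq (by ring))
          linarith [this]
    rw [hAeq]
    refine MeasurableSet.iInter fun q => ?_
    exact measurableSet_le (((hFmMeas i q).sub measurable_const).abs) measurable_const
  -- the good event is contained in the target set
  have hsub : (⋂ i, A i) ⊆ {ω | ENNReal.ofReal (1 - ∑ i, γ i)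
      ≤ Pstar (⋂ i, {x | s i x ≤ that i ω})} := by
    intro ω hω
    simp only [Set.mem_setOf_eq]
    set U := ⋃ i, {x : Ξ | ¬ s i x ≤ that i ω} with hU
    have hUc : Uᶜ = ⋂ i, {x | s i x ≤ that i ω} := by
      rw [hU, Set.compl_iUnion]
      ext x
      simp [not_lt]
    have hUmeas : MeasurableSet U := by
      refine MeasurableSet.iUnion fun i => ?_
      exact ((hs i) measurableSet_Iic).compl
    have hUle : Pstar U ≤ ENNReal.ofReal (∑ i, γ i) := by
      calc Pstar U ≤ ∑' i, Pstar {x : Ξ | ¬ s i x ≤ that i ω} := measure_iUnion_le _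
        _ = ∑ i, Pstar {x : Ξ | ¬ s i x ≤ that i ω} := tsum_fintype _
        _ ≤ ∑ i, ENNReal.ofReal (γ i) := by
              refine Finset.sum_le_sum fun i _ => ?_
              have hmem := Set.mem_iInter.mp hω i
              have hmeas : MeasurableSet {x | s i x ≤ that i ω} := (hs i) measurableSet_Iic
              have := dkw_compl_le Pstar hmeas (le_of_lt (hγ i).1) (hkey i ω hmem)
              simpa [Set.compl_setOf] using this
        _ = ENNReal.ofReal (∑ i, γ i) :=
              (ENNReal.ofReal_sum_of_nonneg (fun i _ => le_of_lt (hγ i).1)).symm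
    have := dkw_lower Pstar hUmeas (Finset.sum_nonneg fun i _ => le_of_lt (hγ i).1) hUle
    rwa [hUc] at this
  -- probability of the good event
  have hBig : ENNReal.ofReal (1 - ∑ i, δ i) ≤ ν (⋂ i, A i) := by
    have hUmeas : MeasurableSet (⋃ i, (A i)ᶜ) :=
      MeasurableSet.iUnion fun i => (hAmeas i).compl
    have hUle : ν (⋃ i, (A i)ᶜ) ≤ ENNReal.ofReal (∑ i, δ i) := by
      calc ν (⋃ i, (A i)ᶜ) ≤ ∑' i, ν (A i)ᶜ := measure_iUnion_le _
        _ = ∑ i, ν (A i)ᶜ := tsum_fintype _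
        _ ≤ ∑ i, ENNReal.ofReal (δ i) := by
              refine Finset.sum_le_sum fun i _ => ?_
              exact dkw_compl_le ν (hAmeas i) (le_of_lt (hδ i).1) (hAprob i)
        _ = ENNReal.ofReal (∑ i, δ i) :=
              (ENNReal.ofReal_sum_of_nonneg (fun i _ => le_of_lt (hδ i).1)).symm
    have := dkw_lower ν hUmeas (Finset.sum_nonneg fun i _ => le_of_lt (hδ i).1) hUle
    rwa [Set.compl_iUnion, funext fun i => compl_compl (A i)] at this
  exact hBig.trans (measure_mono hsub)
end

section
/- Let L_X be an invertible d × d real matrix, μ_X ∈ ℝ^d, μ_Y ∈ ℝ, t_X ≥ 0, r_Y ≥ 0, and define Ξ_{0,X} := {x ∈ ℝ^d : ‖L_X^{−1}(x − μ_X)‖₂ ≤ t_X} and Ξ_{0,Y} := {y ∈ ℝ : |y − μ_Y| ≤ r_Y}. Then for every w ∈ ℝ^d and b ∈ ℝ, the supremum over (x,y) ∈ Ξ_{0,X} × Ξ_{0,Y} of |y − wᵀx − b| equals |μ_Y − μ_Xᵀw − b| + r_Y + t_X·‖L_Xᵀw‖₂. -/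
open Matrix

/-- Euclidean norm on `ℝ^d`. -/
noncomputable def enorm2 {d : ℕ} (v : Fin d → ℝ) : ℝ := Real.sqrt (∑ i, v i ^ 2)

lemma enorm2_nonneg {d : ℕ} (v : Fin d → ℝ) : 0 ≤ enorm2 v := Real.sqrt_nonneg _

lemma enorm2_zero {d : ℕ} : enorm2 (0 : Fin d → ℝ) = 0 := by
  simp [enorm2]

lemma abs_dotProduct_le {d : ℕ} (u v : Fin d → ℝ) :
    |u ⬝ᵥ v| ≤ enorm2 u * enorm2 v := by
  have := abs_real_inner_le_norm ((WithLp.equiv 2 (Fin d → ℝ)).symm u)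
    ((WithLp.equiv 2 (Fin d → ℝ)).symm v)
  simpa [enorm2, PiLp.inner_apply, EuclideanSpace.norm_eq, dotProduct, sq_abs, mul_comm] using this

lemma dotProduct_self_eq {d : ℕ} (v : Fin d → ℝ) : v ⬝ᵥ v = enorm2 v ^ 2 := by
  rw [enorm2, Real.sq_sqrt (by positivity)]
  simp [dotProduct, sq]

lemma enorm2_smul {d : ℕ} (k : ℝ) (v : Fin d → ℝ) :
    enorm2 (k • v) = |k| * enorm2 v := by
  simp only [enorm2, Pi.smul_apply, smul_eq_mul, mul_pow, ← Finset.mul_sum]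
  rw [Real.sqrt_mul (sq_nonneg k), Real.sqrt_sq_eq_abs]

lemma enorm2_eq_zero {d : ℕ} {v : Fin d → ℝ} (h : enorm2 v = 0) : v = 0 := by
  have h2 : ∑ i, v i ^ 2 = 0 := by
    have := congrArg (· ^ 2) h
    simpa [enorm2, Real.sq_sqrt (show (0:ℝ) ≤ ∑ i, v i ^ 2 by positivity)] using this
  funext i
  have := (Finset.sum_eq_zero_iff_of_nonneg (fun i _ => sq_nonneg (v i))).1 h2 i (by simp)
  exact pow_eq_zero_iff (by norm_num) |>.1 this

/-- **Worst-case absolute loss on a product bulk set `Ξ_{0,X} × Ξ_{0,Y}`.**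
For an invertible `L_X`, the supremum of `|y - wᵀx - b|` over the product of the
ellipsoid `{x : ‖L_X^{-1}(x-μ_X)‖₂ ≤ t_X}` and the interval `{y : |y-μ_Y| ≤ r_Y}` equals
`|μ_Y - μ_Xᵀw - b| + r_Y + t_X‖L_Xᵀw‖₂`. -/
theorem sup_abs_loss_product_bulk
    {d : ℕ} (LX : Matrix (Fin d) (Fin d) ℝ) (hLX : IsUnit LX.det)
    (μX : Fin d → ℝ) (μY : ℝ) (tX rY : ℝ) (htX : 0 ≤ tX) (hrY : 0 ≤ rY)
    (w : Fin d → ℝ) (b : ℝ) :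
    sSup ((fun p : (Fin d → ℝ) × ℝ => |p.2 - w ⬝ᵥ p.1 - b|) ''
        ({x : Fin d → ℝ | enorm2 (LX⁻¹ *ᵥ (x - μX)) ≤ tX} ×ˢ
          {y : ℝ | |y - μY| ≤ rY}))
      = |μY - μX ⬝ᵥ w - b| + rY + tX * enorm2 (LXᵀ *ᵥ w) := by
  set T := enorm2 (LXᵀ *ᵥ w) with hT
  set c := μY - μX ⬝ᵥ w - b with hc
  have hT0 : 0 ≤ T := enorm2_nonneg _
  have hinv : LX * LX⁻¹ = 1 := Matrix.mul_nonsing_inv LX hLX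
  have hcancel : ∀ u : Fin d → ℝ, LX *ᵥ (LX⁻¹ *ᵥ u) = u := by
    intro u; rw [Matrix.mulVec_mulVec, hinv, Matrix.one_mulVec]
  have key : ∀ x : Fin d → ℝ, ∀ y : ℝ,
      y - w ⬝ᵥ x - b = c + (y - μY) - (LXᵀ *ᵥ w) ⬝ᵥ (LX⁻¹ *ᵥ (x - μX)) := by
    intro x y
    have h1 : (LXᵀ *ᵥ w) ⬝ᵥ (LX⁻¹ *ᵥ (x - μX)) = w ⬝ᵥ (x - μX) := by
      rw [Matrix.mulVec_transpose, ← Matrix.dotProduct_mulVec, hcancel]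
    rw [h1, dotProduct_sub, hc, dotProduct_comm μX w]
    ring
  apply IsGreatest.csSup_eq
  constructor
  · -- membership: the supremum is attained
    by_cases hTz : T = 0
    · -- LXᵀ w = 0
      have hw0 : LXᵀ *ᵥ w = 0 := enorm2_eq_zero hTz
      set σ : ℝ := if 0 ≤ c then 1 else -1 with hσ
      refine ⟨(μX, μY + σ * rY), ⟨?_, ?_⟩, ?_⟩
      · show enorm2 (LX⁻¹ *ᵥ (μX - μX)) ≤ tX
        simp [enorm2_zero, htX, Matrix.mulVec_zero]
      · show |μY + σ * rY - μY| ≤ rY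
        have hσabs : |σ| = 1 := by
          rcases le_or_gt 0 c with h | h
          · simp [hσ, h]
          · simp [hσ, not_le.mpr h]
        rw [add_sub_cancel_left, abs_mul, hσabs, one_mul, abs_of_nonneg hrY]
      · show |μY + σ * rY - w ⬝ᵥ μX - b| = |c| + rY + tX * T
        rw [hTz, mul_zero, add_zero]
        have : μY + σ * rY - w ⬝ᵥ μX - b = c + σ * rY := by
          rw [hc, dotProduct_comm μX w]; ring
        rw [this]
        rcases le_or_gt 0 c with h | h
        · rw [hσ, if_pos h, one_mul, abs_of_nonneg (by linarith), abs_of_nonneg h]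
        · rw [hσ, if_neg h.not_ge, abs_of_nonpos (by nlinarith), abs_of_neg h]; ring
    · have hTpos : 0 < T := lt_of_le_of_ne hT0 (Ne.symm hTz)
      set σ : ℝ := if 0 ≤ c then 1 else -1 with hσ
      set u : Fin d → ℝ := (-σ * tX / T) • (LXᵀ *ᵥ w) with hu
      have hσabs : |σ| = 1 := by
        rcases le_or_gt 0 c with h | h
        · simp [hσ, h]
        · simp [hσ, not_le.mpr h]
      refine ⟨(μX + LX *ᵥ u, μY + σ * rY), ⟨?_, ?_⟩, ?_⟩
      · show enorm2 (LX⁻¹ *ᵥ (μX + LX *ᵥ u - μX)) ≤ tX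
        have : μX + LX *ᵥ u - μX = LX *ᵥ u := by ring_nf
        rw [this]
        have hLinv : LX⁻¹ *ᵥ (LX *ᵥ u) = u := by
          rw [Matrix.mulVec_mulVec, Matrix.nonsing_inv_mul LX hLX, Matrix.one_mulVec]
        rw [hLinv, hu, enorm2_smul, abs_div, abs_mul, abs_neg, hσabs, one_mul,
          abs_of_nonneg htX, abs_of_pos hTpos, div_mul_cancel₀ _ hTz]
      · show |μY + σ * rY - μY| ≤ rY
        rw [add_sub_cancel_left, abs_mul, hσabs, one_mul, abs_of_nonneg hrY]
      · show |μY + σ * rY - w ⬝ᵥ (μX + LX *ᵥ u) - b| = |c| + rY + tX * T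
        have hdot : (LXᵀ *ᵥ w) ⬝ᵥ u = -σ * tX * T := by
          rw [hu, dotProduct_smul, smul_eq_mul, dotProduct_self_eq, ← hT]
          field_simp
        have := key (μX + LX *ᵥ u) (μY + σ * rY)
        have hx : LX⁻¹ *ᵥ (μX + LX *ᵥ u - μX) = u := by
          have h1 : μX + LX *ᵥ u - μX = LX *ᵥ u := by ring_nf
          rw [h1, Matrix.mulVec_mulVec, Matrix.nonsing_inv_mul LX hLX, Matrix.one_mulVec]
        rw [hx] at this
        rw [this, hdot, add_sub_cancel_left]
        have heq : c + σ * rY - -σ * tX * T = c + σ * (rY + tX * T) := by ring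
        rw [heq]
        have hnn : 0 ≤ rY + tX * T := by positivity
        rcases le_or_gt 0 c with h | h
        · rw [hσ, if_pos h, one_mul, abs_of_nonneg (by linarith), abs_of_nonneg h]; ring
        · rw [hσ, if_neg h.not_ge, abs_of_nonpos (by nlinarith), abs_of_neg h]; ring
  · -- upper bound
    rintro a ⟨⟨x, y⟩, ⟨hx, hy⟩, rfl⟩
    simp only [Set.mem_setOf_eq] at hx hy
    have hk := key x y
    have hcs : |(LXᵀ *ᵥ w) ⬝ᵥ (LX⁻¹ *ᵥ (x - μX))| ≤ T * tX := by
      refine le_trans (abs_dotProduct_le _ _) ?_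
      exact mul_le_mul_of_nonneg_left hx hT0
    calc |y - w ⬝ᵥ x - b| = |c + (y - μY) - (LXᵀ *ᵥ w) ⬝ᵥ (LX⁻¹ *ᵥ (x - μX))| := by rw [hk]
      _ ≤ |c| + |y - μY| + |(LXᵀ *ᵥ w) ⬝ᵥ (LX⁻¹ *ᵥ (x - μX))| := by
          exact (abs_sub _ _).trans (by gcongr; exact abs_add_le _ _)
      _ ≤ |c| + rY + tX * T := by rw [mul_comm tX T]; gcongr
end

section
/- Let P and Q be probability measures on a measurable space (Ξ, F). Let Q = Q^a + Q^s be the Lebesgue decomposition of Q with respect to P, where Q^a ≪ P and Q^s ⟂ P, and let f := dQ^a/dP be the Radon–Nikodym derivative of the absolutely continuous part. Then LV(Q,P) = 1 − essinf_P f, where LV(Q,P) := sup over measurable A with P(A) > 0 of (P(A) − Q(A))/P(A) and essinf_P f is the essential infimum of f with respect to P. -/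
open MeasureTheory
open scoped ENNReal

/-- The linear-vacuous (LV) distortion of `Q` from the centre `P`:
`LV(Q,P) = sup { (P(A) - Q(A))/P(A) : A measurable, P(A) > 0 }`
(with the real-`sSup` convention that the supremum of the empty set is `0`). -/
noncomputable def LV {Ξ : Type*} [MeasurableSpace Ξ] (Q P : Measure Ξ) : ℝ :=
  sSup {r : ℝ | ∃ A : Set Ξ, MeasurableSet A ∧ 0 < P A ∧
    r = ((P A).toReal - (Q A).toReal) / (P A).toReal}

/-- **Radon–Nikodym characterisation of the LV distortion.**
If `Q = Q^a + Q^s` is the Lebesgue decomposition of `Q` with respect to `P`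
(`Q^a ≪ P`, `Q^s ⟂ P`) and `f = dQ^a/dP` is the Radon–Nikodym derivative
(`Q^a = P.withDensity f`), then `LV(Q,P) = 1 - essinf_P f`. -/
theorem LV_eq_one_sub_essInf_rnDeriv
    {Ξ : Type*} [MeasurableSpace Ξ]
    (P Q : Measure Ξ) [IsProbabilityMeasure P] [IsProbabilityMeasure Q]
    (Qa Qs : Measure Ξ)
    (hQa : Qa ≪ P) (hQs : Qs ⟂ₘ P) (hsum : Q = Qa + Qs)
    (f : Ξ → ℝ≥0∞) (hf : Measurable f) (hdens : Qa = P.withDensity f) :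
    LV Q P = 1 - (essInf f P).toReal := by
  set m : ℝ≥0∞ := essInf f P with hm
  have hQa_univ : Qa Set.univ = ∫⁻ x, f x ∂P := by
    rw [hdens, withDensity_apply _ MeasurableSet.univ, Measure.restrict_univ]
  have hQ_univ : Qa Set.univ + Qs Set.univ = 1 := by
    have := congrArg (fun μ : Measure Ξ => μ Set.univ) hsum
    simpa [Measure.add_apply] using this.symm
  have hQa_le_one : Qa Set.univ ≤ 1 := by
    rw [← hQ_univ]; exact le_self_add
  have h_ae : ∀ᵐ x ∂P, m ≤ f x := ae_essInf_le
  have hm_le_one : m ≤ 1 := by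
    have h1 : ∫⁻ _, m ∂P ≤ ∫⁻ x, f x ∂P := lintegral_mono_ae h_ae
    have h2 : ∫⁻ _, m ∂P = m := by simp
    calc m = ∫⁻ _, m ∂P := h2.symm
      _ ≤ ∫⁻ x, f x ∂P := h1
      _ = Qa Set.univ := hQa_univ.symm
      _ ≤ 1 := hQa_le_one
  have hm_ne_top : m ≠ ⊤ := ne_top_of_le_ne_top ENNReal.one_ne_top hm_le_one
  have hmt_le_one : m.toReal ≤ 1 := by
    have := ENNReal.toReal_mono ENNReal.one_ne_top hm_le_one
    simpa using this
  set S : Set ℝ := {r : ℝ | ∃ A : Set Ξ, MeasurableSet A ∧ 0 < P A ∧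
    r = ((P A).toReal - (Q A).toReal) / (P A).toReal} with hS
  have h_ub : ∀ r ∈ S, r ≤ 1 - m.toReal := by
    rintro r ⟨A, hA, hPA, rfl⟩
    have hPA1 : P A ≤ 1 := prob_le_one
    have hPAne : P A ≠ ⊤ := ne_top_of_le_ne_top ENNReal.one_ne_top hPA1
    have hQAne : Q A ≠ ⊤ := ne_top_of_le_ne_top ENNReal.one_ne_top prob_le_one
    have hQaA : Qa A = ∫⁻ x in A, f x ∂P := by
      rw [hdens, withDensity_apply _ hA]
    have hlow : m * P A ≤ Q A := by
      have h1 : ∫⁻ _, m ∂(P.restrict A) ≤ ∫⁻ x in A, f x ∂P :=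
        lintegral_mono_ae (ae_restrict_of_ae h_ae)
      have h2 : ∫⁻ _, m ∂(P.restrict A) = m * P A := by
        simp [Measure.restrict_apply_univ]
      calc m * P A = ∫⁻ _, m ∂(P.restrict A) := h2.symm
        _ ≤ ∫⁻ x in A, f x ∂P := h1
        _ = Qa A := hQaA.symm
        _ ≤ Q A := by rw [hsum]; exact le_self_add
    have hlowR : m.toReal * (P A).toReal ≤ (Q A).toReal := by
      have := ENNReal.toReal_mono hQAne hlow
      rwa [ENNReal.toReal_mul] at this
    have hpa : 0 < (P A).toReal := ENNReal.toReal_pos hPA.ne' hPAne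
    rw [div_le_iff₀ hpa]
    nlinarith
  have h_ub1 : ∀ r ∈ S, r ≤ 1 := fun r hr =>
    le_trans (h_ub r hr) (by linarith [ENNReal.toReal_nonneg (a := m)])
  have hbdd : BddAbove S := ⟨1, h_ub1⟩
  apply le_antisymm
  · exact Real.sSup_le h_ub (by linarith)
  · show 1 - m.toReal ≤ sSup S
    apply le_of_forall_pos_le_add
    intro ε hε
    obtain ⟨s, hsm, hQs0, hPs0⟩ := hQs
    set b : ℝ≥0∞ := m + ENNReal.ofReal ε with hb
    have hb_ne_top : b ≠ ⊤ := by
      simp [hb, hm_ne_top, ENNReal.ofReal_ne_top]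
    have hmb : m < b := by
      rw [hb]
      exact ENNReal.lt_add_right hm_ne_top (by simp [hε, ENNReal.ofReal_pos.mpr hε])
    set B : Set Ξ := {x | f x < b} with hBdef
    have hBmeas : MeasurableSet B := measurableSet_lt hf measurable_const
    have hPB : P B ≠ 0 := by
      intro h0
      have : ∀ᵐ x ∂P, b ≤ f x := by
        rw [ae_iff]
        simpa [hBdef, not_le] using h0
      exact absurd (le_essInf_of_ae_le b this) (not_le.mpr hmb)
    set A : Set Ξ := B ∩ s with hAdef
    have hAmeas : MeasurableSet A := hBmeas.inter hsm
    have hPA : P A = P B := measure_inter_conull hPs0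
    have hPApos : 0 < P A := by rw [hPA]; exact pos_iff_ne_zero.mpr hPB
    have hPAne : P A ≠ ⊤ := ne_top_of_le_ne_top ENNReal.one_ne_top prob_le_one
    have hQsA : Qs A = 0 := measure_mono_null Set.inter_subset_right hQs0
    have hQA : Q A = Qa A := by
      rw [hsum, Measure.add_apply, hQsA, add_zero]
    have hQAub : Q A ≤ b * P A := by
      rw [hQA, hdens, withDensity_apply _ hAmeas]
      have hmono : ∫⁻ x in A, f x ∂P ≤ ∫⁻ _ in A, b ∂P := by
        apply setLIntegral_mono measurable_const
        intro x hx
        exact (hx.1 : f x < b).le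
      calc ∫⁻ x in A, f x ∂P ≤ ∫⁻ _ in A, b ∂P := hmono
        _ = b * P A := by simp [mul_comm]
    have hQAne : Q A ≠ ⊤ := ne_top_of_le_ne_top ENNReal.one_ne_top prob_le_one
    have hQAubR : (Q A).toReal ≤ (m.toReal + ε) * (P A).toReal := by
      have := ENNReal.toReal_mono (ENNReal.mul_ne_top hb_ne_top hPAne) hQAub
      rwa [ENNReal.toReal_mul, hb, ENNReal.toReal_add hm_ne_top ENNReal.ofReal_ne_top,
        ENNReal.toReal_ofReal hε.le] at this
    have hpa : 0 < (P A).toReal := ENNReal.toReal_pos hPApos.ne' hPAne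
    have hrin : ((P A).toReal - (Q A).toReal) / (P A).toReal ∈ S :=
      ⟨A, hAmeas, hPApos, rfl⟩
    have hge : 1 - m.toReal - ε ≤ ((P A).toReal - (Q A).toReal) / (P A).toReal := by
      rw [le_div_iff₀ hpa]
      nlinarith
    have hle := le_csSup hbdd hrin
    calc 1 - m.toReal ≤ ((P A).toReal - (Q A).toReal) / (P A).toReal + ε := by linarith
      _ ≤ sSup S + ε := by linarith
end
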